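/- arXiv:1911.12009 — 2 statements merged into one kernel-verified Lean document; each statement's English description precedes it below -/
import Mathlib

section
/- Every involution in S_n can be written as w^{-1} ∘ w for some permutation w ∈ S_n, where ∘ denotes the Demazure product; that is, the set {w^{-1} ∘ w : w ∈ S_n} equals the set of involutions I_n = {y ∈ S_n : y = y^{-1}}. -/
open Equiv

/-- The simple transposition `s_a` of `Fin n` (swapping `a` and `a+1`, `0`-indexed);
the identity when `a` is out of range. -/
def sTr (n : ℕ) (a : ℕ) : Equiv.Perm (Fin n) :=
  if h : a + 1 < n then Equiv.swap ⟨a, Nat.lt_of_succ_lt h⟩ ⟨a + 1, h⟩ else 1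

/-- The product `s_{a_1} s_{a_2} ⋯ s_{a_l}` of the simple transpositions in a word. -/
def wordProd (n : ℕ) (l : List ℕ) : Equiv.Perm (Fin n) :=
  (l.map (sTr n)).prod

/-- A word whose letters are all valid indices of simple transpositions of `S_n`. -/
def IsWord (n : ℕ) (l : List ℕ) : Prop := ∀ a ∈ l, a + 1 < n

/-- The Coxeter length of a permutation: the minimal length of a word in the simple
transpositions expressing it. -/
noncomputable def len (n : ℕ) (w : Equiv.Perm (Fin n)) : ℕ :=
  sInf {k | ∃ l : List ℕ, IsWord n l ∧ wordProd n l = w ∧ l.length = k}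

/-- `l` is a reduced word for `w`: a minimal-length word with product `w`. -/
def IsReducedWord (n : ℕ) (l : List ℕ) (w : Equiv.Perm (Fin n)) : Prop :=
  IsWord n l ∧ wordProd n l = w ∧
    ∀ l' : List ℕ, IsWord n l' → wordProd n l' = w → l.length ≤ l'.length

/-- One step of the Demazure (0-Hecke) product: `u ∘ s_a = u s_a` if the length
increases, and `u` otherwise. -/
noncomputable def demStep (n : ℕ) (u : Equiv.Perm (Fin n)) (a : ℕ) : Equiv.Perm (Fin n) :=
  if len n (u * sTr n a) = len n u + 1 then u * sTr n a else u

/-- The Demazure product `s_{a_1} ∘ s_{a_2} ∘ ⋯ ∘ s_{a_l}` of a word. -/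
noncomputable def demWord (n : ℕ) (l : List ℕ) : Equiv.Perm (Fin n) :=
  l.foldl (demStep n) 1

/-- A choice of reduced word for each permutation. -/
noncomputable def redWord (n : ℕ) (w : Equiv.Perm (Fin n)) : List ℕ := by
  classical
  exact if h : ∃ l, IsReducedWord n l w then h.choose else []

/-- The Demazure product `v ∘ w` of two permutations: the Demazure product of the
concatenation of reduced words for `v` and for `w`. -/
noncomputable def dem (n : ℕ) (v w : Equiv.Perm (Fin n)) : Equiv.Perm (Fin n) :=
  demWord n (redWord n v ++ redWord n w)

/-- `s_{a_l} ∘ ⋯ ∘ s_{a_1} ∘ 1 ∘ s_{a_1} ∘ ⋯ ∘ s_{a_l}`, the involution-word product. -/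
noncomputable def invWordProd (n : ℕ) (l : List ℕ) : Equiv.Perm (Fin n) :=
  demWord n (l.reverse ++ l)

/-- `l` is an involution word for `y`: a minimal-length word with
`y = s_{a_l} ∘ ⋯ ∘ s_{a_1} ∘ 1 ∘ s_{a_1} ∘ ⋯ ∘ s_{a_l}`. -/
def IsInvWord (n : ℕ) (l : List ℕ) (y : Equiv.Perm (Fin n)) : Prop :=
  IsWord n l ∧ invWordProd n l = y ∧
    ∀ l' : List ℕ, IsWord n l' → invWordProd n l' = y → l.length ≤ l'.length

/-- `w` is an atom for `y`: a minimal-length permutation with `y = w⁻¹ ∘ w`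
(Demazure product). -/
def IsAtomOf (n : ℕ) (w y : Equiv.Perm (Fin n)) : Prop :=
  dem n w⁻¹ w = y ∧ ∀ v : Equiv.Perm (Fin n), dem n v⁻¹ v = y → len n w ≤ len n v

/-- The word `1, 3, 5, …, (n-1)` (in `1`-indexed terms), i.e. `0,2,4,…` `0`-indexed. -/
def fpfBase (n : ℕ) : List ℕ := (List.range (n / 2)).map (fun i => 2 * i)

/-- The minimal fixed-point-free involution `1^fpf_n = s_1 s_3 ⋯ s_{n-1}`. -/
def onefpf (n : ℕ) : Equiv.Perm (Fin n) := wordProd n (fpfBase n)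

/-- `s_{a_l} ⋯ s_{a_1} · 1^fpf_n · s_{a_1} ⋯ s_{a_l}` (ordinary products). -/
def conjWordProd (n : ℕ) (l : List ℕ) : Equiv.Perm (Fin n) :=
  wordProd n l.reverse * onefpf n * wordProd n l

/-- `l` is an fpf-involution word for `z`. -/
def IsFpfInvWord (n : ℕ) (l : List ℕ) (z : Equiv.Perm (Fin n)) : Prop :=
  IsWord n l ∧ conjWordProd n l = z ∧
    ∀ l' : List ℕ, IsWord n l' → conjWordProd n l' = z → l.length ≤ l'.length

/-- `w` is an fpf-atom for `z`: a minimal-length permutation with `z = w⁻¹ · 1^fpf_n · w`. -/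
def IsFpfAtomOf (n : ℕ) (w z : Equiv.Perm (Fin n)) : Prop :=
  w⁻¹ * onefpf n * w = z ∧
    ∀ v : Equiv.Perm (Fin n), v⁻¹ * onefpf n * v = z → len n w ≤ len n v

/-- Bruhat order on `S_n`: generated by `u < u t` for transpositions `t` that
increase length. -/
def BruhatLE (n : ℕ) (u w : Equiv.Perm (Fin n)) : Prop :=
  Relation.ReflTransGen
    (fun x y => len n x < len n y ∧ ∃ t : Equiv.Perm (Fin n), Equiv.Perm.IsSwap t ∧ y = x * t)
    u w

/-- The Rothe diagram `D(w) = {(i,j) : w(i) > j, w⁻¹(j) > i}` (`0`-indexed). -/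
def rothe (n : ℕ) (w : Equiv.Perm (Fin n)) : Finset (Fin n × Fin n) :=
  Finset.univ.filter (fun p => p.2 < w p.1 ∧ p.1 < w⁻¹ p.2)

/-- The number of inversions of a permutation. -/
def invNum (n : ℕ) (w : Equiv.Perm (Fin n)) : ℕ :=
  (Finset.univ.filter (fun p : Fin n × Fin n => p.1 < p.2 ∧ w p.2 < w p.1)).card

/-- The transpose of a finite diagram. -/
def trFinset (n : ℕ) (D : Finset (Fin n × Fin n)) : Finset (Fin n × Fin n) :=
  D.image (fun p => (p.2, p.1))

/-- The transpose of a diagram (as a set). -/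
def trSet {n : ℕ} (D : Set (Fin n × Fin n)) : Set (Fin n × Fin n) :=
  {p | (p.2, p.1) ∈ D}

/-- The northwest partial order: `(i,j) ≤ (i',j')` iff `i ≤ i'` and `j ≤ j'`. -/
def NWle {n : ℕ} (p q : Fin n × Fin n) : Prop := p.1 ≤ q.1 ∧ p.2 ≤ q.2

/-- A lower set for the northwest order (i.e., a Ferrers/partition diagram). -/
def IsLowerNW {n : ℕ} (S : Set (Fin n × Fin n)) : Prop :=
  ∀ p q : Fin n × Fin n, NWle p q → q ∈ S → p ∈ S

/-- The dominant component of a diagram: the union of all `≤_NW`-lower sets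
contained in it. -/
def domComp {n : ℕ} (D : Set (Fin n × Fin n)) : Set (Fin n × Fin n) :=
  ⋃₀ {S | IsLowerNW S ∧ S ⊆ D}

/-- The Lehmer code `c_i(w)`: the number of cells of the Rothe diagram in row `i`. -/
def code (n : ℕ) (w : Equiv.Perm (Fin n)) (i : Fin n) : ℕ :=
  (Finset.univ.filter (fun j : Fin n => (i, j) ∈ rothe n w)).card

/-- The involution code `ĉ_i(y)`: the number of `j > i` with `y(i) > y(j)` and
`i ≥ y(j)` (`0`-indexed translation of the `1`-indexed definition). -/
def invCode (n : ℕ) (y : Equiv.Perm (Fin n)) (i : Fin n) : ℕ :=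
  (Finset.univ.filter (fun j : Fin n => i < j ∧ y j < y i ∧ y j ≤ i)).card

/-- The fpf-involution code `ĉ^fpf_i(z)`: the number of `j > i` with `z(i) > z(j)`
and `i > z(j)`. -/
def fpfInvCode (n : ℕ) (z : Equiv.Perm (Fin n)) (i : Fin n) : ℕ :=
  (Finset.univ.filter (fun j : Fin n => i < j ∧ z j < z i ∧ z j < i)).card

/-- The word `b_1 a_1 b_2 a_2 ⋯ b_l a_l` with repeated letters removed, where
`a_1 < ⋯ < a_l` are the `a` with `a ≤ y(a)` and `b_i = y(a_i)`; this is the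
one-line notation of `α_min(y)⁻¹`. -/
def amWord (n : ℕ) (y : Equiv.Perm (Fin n)) : List (Fin n) :=
  (((List.finRange n).filter (fun a => a ≤ y a)).flatMap (fun a => [y a, a])).dedup

/-- The standard reading word of a diagram: read rows top to bottom, each row right
to left, recording the (`0`-indexed) antidiagonal index `i+j` of each cell. -/
def readWord (n : ℕ) (D : Finset (Fin n × Fin n)) : List ℕ :=
  (List.finRange n).flatMap (fun i =>
    ((List.finRange n).reverse.filter (fun j => (i, j) ∈ D)).map
      (fun j => (i : ℕ) + (j : ℕ)))

/-- `D` is a reduced pipe dream for `w`: a subset of the staircase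
`{(i,j) : i + j ≤ n}` (`1`-indexed) whose standard reading word is a reduced word
for `w`. -/
def IsPipeDream (n : ℕ) (D : Finset (Fin n × Fin n)) (w : Equiv.Perm (Fin n)) : Prop :=
  (∀ p ∈ D, (p.1 : ℕ) + (p.2 : ℕ) + 2 ≤ n) ∧ IsReducedWord n (readWord n D) w


section DemAux

open Equiv List

variable {n : ℕ}

lemma sTr_of_lt {a : ℕ} (h : a + 1 < n) :
    sTr n a = Equiv.swap ⟨a, Nat.lt_of_succ_lt h⟩ ⟨a + 1, h⟩ := dif_pos h

lemma sTr_of_ge {a : ℕ} (h : ¬ a + 1 < n) : sTr n a = 1 := dif_neg h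

lemma sTr_mul_self (a : ℕ) : sTr n a * sTr n a = 1 := by
  by_cases h : a + 1 < n
  · rw [sTr_of_lt h]; exact Equiv.swap_mul_self _ _
  · rw [sTr_of_ge h]; simp

lemma sTr_inv (a : ℕ) : (sTr n a)⁻¹ = sTr n a := by
  by_cases h : a + 1 < n
  · rw [sTr_of_lt h]; exact Equiv.swap_inv _ _
  · rw [sTr_of_ge h]; simp

lemma sTr_sTr (a : ℕ) (x : Fin n) : sTr n a (sTr n a x) = x := by
  have := congrArg (fun u => u x) (sTr_mul_self (n := n) a)
  simpa using this

lemma sTr_val {a : ℕ} (h : a + 1 < n) (x : Fin n) :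
    (sTr n a x : ℕ) = if (x : ℕ) = a then a + 1 else if (x : ℕ) = a + 1 then a else x := by
  rw [sTr_of_lt h, Equiv.swap_apply_def]
  split_ifs with h1 h2 h3 h4 <;> simp_all [Fin.ext_iff] <;> omega

lemma sTr_left {a : ℕ} (h : a + 1 < n) :
    sTr n a ⟨a, Nat.lt_of_succ_lt h⟩ = ⟨a + 1, h⟩ := by
  rw [sTr_of_lt h]; exact Equiv.swap_apply_left _ _

lemma sTr_right {a : ℕ} (h : a + 1 < n) :
    sTr n a ⟨a + 1, h⟩ = ⟨a, Nat.lt_of_succ_lt h⟩ := by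
  rw [sTr_of_lt h]; exact Equiv.swap_apply_right _ _

lemma sTr_other {a : ℕ} (h : a + 1 < n) {x : Fin n} (h1 : (x : ℕ) ≠ a)
    (h2 : (x : ℕ) ≠ a + 1) : sTr n a x = x := by
  apply Fin.ext; rw [sTr_val h]; simp [h1, h2]

lemma mul_sTr_apply {a : ℕ} (u : Perm (Fin n)) (x : Fin n) :
    (u * sTr n a) x = u (sTr n a x) := rfl

lemma invNum_mul_sTr_of_lt {a : ℕ} (h : a + 1 < n) (w : Perm (Fin n))
    (hv : w ⟨a, Nat.lt_of_succ_lt h⟩ < w ⟨a + 1, h⟩) :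
    invNum n (w * sTr n a) = invNum n w + 1 := by
  classical
  set pa : Fin n := ⟨a, Nat.lt_of_succ_lt h⟩ with hpa
  set pa1 : Fin n := ⟨a + 1, h⟩ with hpa1
  set s := sTr n a with hs
  have sss : ∀ x : Fin n, s (s x) = x := fun x => sTr_sTr a x
  have hlt : ∀ p : Fin n × Fin n, p.1 < p.2 → p ≠ (pa, pa1) → s p.1 < s p.2 := by
    intro p h1 h2
    have hne : ¬((p.1 : ℕ) = a ∧ (p.2 : ℕ) = a + 1) := by
      rintro ⟨c1, c2⟩
      exact h2 (Prod.ext (Fin.ext c1) (Fin.ext c2))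
    have v1 := sTr_val h p.1
    have v2 := sTr_val h p.2
    rw [Fin.lt_def] at h1 ⊢
    rw [hs]
    rw [v1, v2]
    split_ifs <;> omega
  set A := Finset.univ.filter
    (fun p : Fin n × Fin n => p.1 < p.2 ∧ (w * s) p.2 < (w * s) p.1) with hA
  set B := Finset.univ.filter
    (fun p : Fin n × Fin n => p.1 < p.2 ∧ w p.2 < w p.1) with hB
  have memA : ∀ p : Fin n × Fin n, p ∈ A ↔ p.1 < p.2 ∧ w (s p.2) < w (s p.1) := by
    intro p; rw [hA, Finset.mem_filter]; simp [mul_sTr_apply]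
  have memB : ∀ p : Fin n × Fin n, p ∈ B ↔ p.1 < p.2 ∧ w p.2 < w p.1 := by
    intro p; simp [hB]
  have spa : s pa = pa1 := sTr_left h
  have spa1 : s pa1 = pa := sTr_right h
  have hcard : (A.erase (pa, pa1)).card = (B.erase (pa, pa1)).card := by
    apply Finset.card_bij' (i := fun p _ => (s p.1, s p.2)) (j := fun p _ => (s p.1, s p.2))
    · intro p hp
      rw [Finset.mem_erase] at hp ⊢
      obtain ⟨hpe, hp⟩ := hp
      rw [memA] at hp
      have hlt' := hlt p hp.1 hpe
      constructor
      · intro hc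
        have e1 : s p.1 = pa := congrArg Prod.fst hc
        have e2 : s p.2 = pa1 := congrArg Prod.snd hc
        have : p.1 = pa1 := by
          have := congrArg s e1; rwa [sss, spa] at this
        have h2 : p.2 = pa := by
          have := congrArg s e2; rwa [sss, spa1] at this
        rw [this, h2] at hp
        exact absurd hp.1 (by simp [Fin.lt_def, hpa, hpa1])
      · rw [memB]
        exact ⟨hlt', by simpa [sss] using hp.2⟩
    · intro p hp
      rw [Finset.mem_erase] at hp ⊢
      obtain ⟨hpe, hp⟩ := hp
      rw [memB] at hp
      have hlt' := hlt p hp.1 hpe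
      constructor
      · intro hc
        have e1 : s p.1 = pa := congrArg Prod.fst hc
        have e2 : s p.2 = pa1 := congrArg Prod.snd hc
        have : p.1 = pa1 := by
          have := congrArg s e1; rwa [sss, spa] at this
        have h2 : p.2 = pa := by
          have := congrArg s e2; rwa [sss, spa1] at this
        rw [this, h2] at hp
        exact absurd hp.1 (by simp [Fin.lt_def, hpa, hpa1])
      · rw [memA]
        exact ⟨hlt', by simpa [sss] using hp.2⟩
    · intro p hp; simp [sss]
    · intro p hp; simp [sss]
  have hAin : (pa, pa1) ∈ A := by
    rw [memA]
    refine ⟨by simp [Fin.lt_def, hpa, hpa1], ?_⟩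
    rw [spa, spa1]; exact hv
  have hBout : (pa, pa1) ∉ B := by
    rw [memB]
    rintro ⟨-, hc⟩
    exact absurd hv (not_lt.2 hc.le)
  have e1 : A.card = (A.erase (pa, pa1)).card + 1 := (Finset.card_erase_add_one hAin).symm
  have e2 : B.erase (pa, pa1) = B := Finset.erase_eq_of_notMem hBout
  show A.card = B.card + 1
  rw [e1, hcard, e2]

lemma invNum_mul_sTr_of_gt {a : ℕ} (h : a + 1 < n) (w : Perm (Fin n))
    (hv : w ⟨a + 1, h⟩ < w ⟨a, Nat.lt_of_succ_lt h⟩) :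
    invNum n w = invNum n (w * sTr n a) + 1 := by
  have h2 : (w * sTr n a) ⟨a, Nat.lt_of_succ_lt h⟩ < (w * sTr n a) ⟨a + 1, h⟩ := by
    rw [mul_sTr_apply, mul_sTr_apply, sTr_left h, sTr_right h]; exact hv
  have := invNum_mul_sTr_of_lt h (w * sTr n a) h2
  rw [mul_assoc, sTr_mul_self, mul_one] at this
  exact this

lemma wordProd_nil : wordProd n [] = 1 := rfl

lemma wordProd_cons (a : ℕ) (t : List ℕ) :
    wordProd n (a :: t) = sTr n a * wordProd n t := by
  simp [wordProd]

lemma wordProd_append (l1 l2 : List ℕ) :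
    wordProd n (l1 ++ l2) = wordProd n l1 * wordProd n l2 := by
  simp [wordProd]

lemma wordProd_concat (t : List ℕ) (a : ℕ) :
    wordProd n (t ++ [a]) = wordProd n t * sTr n a := by
  rw [wordProd_append]; simp [wordProd]

lemma wordProd_reverse (l : List ℕ) : wordProd n l.reverse = (wordProd n l)⁻¹ := by
  induction l with
  | nil => simp [wordProd]
  | cons a t ih =>
    rw [List.reverse_cons, wordProd_concat, ih, wordProd_cons, mul_inv_rev, sTr_inv]

lemma invNum_one : invNum n (1 : Perm (Fin n)) = 0 := by
  rw [invNum, Finset.card_eq_zero, Finset.filter_eq_empty_iff]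
  rintro p -
  rintro ⟨h1, h2⟩
  simp only [Perm.one_apply] at h2
  exact absurd h1 (not_lt.2 h2.le)

lemma invNum_inv (w : Perm (Fin n)) : invNum n w⁻¹ = invNum n w := by
  rw [invNum, invNum]
  apply Finset.card_bij' (i := fun p _ => (w⁻¹ p.2, w⁻¹ p.1)) (j := fun p _ => (w p.2, w p.1))
  · intro p hp
    simp only [Finset.mem_filter, Finset.mem_univ, true_and] at hp ⊢
    exact ⟨hp.2, by simpa using hp.1⟩
  · intro p hp
    simp only [Finset.mem_filter, Finset.mem_univ, true_and] at hp ⊢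
    exact ⟨hp.2, by simpa using hp.1⟩
  · intro p hp; simp
  · intro p hp; simp

lemma eq_one_of_strictMono {y : Perm (Fin n)} (hm : ∀ i j : Fin n, i < j → y i < y j) :
    y = 1 := by
  have hm' : ∀ i j : Fin n, i < j → y⁻¹ i < y⁻¹ j := by
    intro i j hij
    rcases lt_trichotomy (y⁻¹ i) (y⁻¹ j) with h | h | h
    · exact h
    · have : i = j := by
        have := congrArg y h; simpa using this
      exact absurd this (Fin.ne_of_lt hij)
    · have h2 := hm _ _ h
      simp only [Perm.inv_def, Equiv.apply_symm_apply] at h2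
      exact absurd hij (not_lt.2 h2.le)
  have key : ∀ (f : Perm (Fin n)), (∀ i j : Fin n, i < j → f i < f j) → ∀ i, i ≤ f i := by
    intro f hf i
    have himg : (Finset.Iio i).image f ⊆ Finset.Iio (f i) := by
      intro x hx
      simp only [Finset.mem_image, Finset.mem_Iio] at hx ⊢
      obtain ⟨j, hj, rfl⟩ := hx
      exact hf _ _ hj
    have hcard := Finset.card_le_card himg
    rw [Finset.card_image_of_injective _ f.injective] at hcard
    rw [Fin.card_Iio, Fin.card_Iio] at hcard
    exact hcard
  have h1 := key y hm
  have h2 := key y⁻¹ hm'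
  ext i
  have h3 : y i ≤ y⁻¹ (y i) := h2 (y i)
  simp only [Perm.inv_def, Equiv.symm_apply_apply] at h3
  have h4 := le_antisymm h3 (h1 i)
  rw [h4]
  simp

lemma exists_descent {w : Perm (Fin n)} (hw : w ≠ 1) :
    ∃ a : ℕ, ∃ h : a + 1 < n, w ⟨a + 1, h⟩ < w ⟨a, Nat.lt_of_succ_lt h⟩ := by
  by_contra hc
  push_neg at hc
  apply hw
  apply eq_one_of_strictMono
  have adj : ∀ (a : ℕ) (h : a + 1 < n),
      w ⟨a, Nat.lt_of_succ_lt h⟩ < w ⟨a + 1, h⟩ := by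
    intro a h
    rcases lt_or_eq_of_le (hc a h) with h' | h'
    · exact h'
    · exfalso
      have := w.injective h'
      rw [Fin.ext_iff] at this
      simp at this
  have gap : ∀ (d : ℕ) (i j : Fin n), (i : ℕ) + d + 1 = (j : ℕ) → w i < w j := by
    intro d
    induction d with
    | zero =>
      intro i j hij
      have h : (i : ℕ) + 1 < n := by have := j.isLt; omega
      have := adj i h
      have e1 : (⟨(i : ℕ), Nat.lt_of_succ_lt h⟩ : Fin n) = i := by apply Fin.ext; rfl
      have e2 : (⟨(i : ℕ) + 1, h⟩ : Fin n) = j := by apply Fin.ext; simpa using hij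
      rwa [e1, e2] at this
    | succ d ih =>
      intro i j hij
      have hj : (j : ℕ) - 1 < n := by have := j.isLt; omega
      set j' : Fin n := ⟨(j : ℕ) - 1, hj⟩ with hj'
      have step1 : w i < w j' := ih i j' (by simp [hj']; omega)
      have h : (j : ℕ) - 1 + 1 < n := by have := j.isLt; omega
      have step2 := adj ((j : ℕ) - 1) h
      have e1 : (⟨(j : ℕ) - 1, Nat.lt_of_succ_lt h⟩ : Fin n) = j' := by apply Fin.ext; rfl
      have e2 : (⟨(j : ℕ) - 1 + 1, h⟩ : Fin n) = j := by apply Fin.ext; simp; omega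
      rw [e1, e2] at step2
      exact lt_trans step1 step2
  intro i j hij
  exact gap ((j : ℕ) - (i : ℕ) - 1) i j (by rw [Fin.lt_def] at hij; omega)

lemma eq_one_of_invNum_eq_zero {w : Perm (Fin n)} (hw : invNum n w = 0) : w = 1 := by
  apply eq_one_of_strictMono
  intro i j hij
  rcases lt_trichotomy (w i) (w j) with h | h | h
  · exact h
  · exact absurd (w.injective h) (Fin.ne_of_lt hij)
  · exfalso
    rw [invNum, Finset.card_eq_zero, Finset.filter_eq_empty_iff] at hw
    exact hw (Finset.mem_univ (i, j)) ⟨hij, h⟩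

lemma invNum_mul_sTr_le (u : Perm (Fin n)) (a : ℕ) :
    invNum n (u * sTr n a) ≤ invNum n u + 1 := by
  by_cases h : a + 1 < n
  · rcases lt_trichotomy (u ⟨a, Nat.lt_of_succ_lt h⟩) (u ⟨a + 1, h⟩) with h' | h' | h'
    · rw [invNum_mul_sTr_of_lt h u h']
    · exact absurd (u.injective h') (by simp [Fin.ext_iff])
    · have := invNum_mul_sTr_of_gt h u h'; omega
  · rw [sTr_of_ge h, mul_one]; omega

lemma invNum_mul_wordProd_le (l : List ℕ) (u : Perm (Fin n)) :
    invNum n (u * wordProd n l) ≤ invNum n u + l.length := by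
  induction l generalizing u with
  | nil => simp [wordProd_nil]
  | cons a t ih =>
    rw [wordProd_cons, ← mul_assoc]
    calc invNum n (u * sTr n a * wordProd n t) ≤ invNum n (u * sTr n a) + t.length := ih _
      _ ≤ invNum n u + 1 + t.length := by have := invNum_mul_sTr_le u a; omega
      _ = invNum n u + (a :: t).length := by simp; omega

lemma invNum_wordProd_le (l : List ℕ) : invNum n (wordProd n l) ≤ l.length := by
  have := invNum_mul_wordProd_le l (1 : Perm (Fin n))
  rwa [one_mul, invNum_one, zero_add] at this

lemma exists_word_invNum (N : ℕ) : ∀ w : Perm (Fin n), invNum n w ≤ N →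
    ∃ l : List ℕ, IsWord n l ∧ wordProd n l = w ∧ l.length = invNum n w := by
  induction N with
  | zero =>
    intro w hw
    have : w = 1 := eq_one_of_invNum_eq_zero (Nat.le_zero.1 hw)
    subst this
    exact ⟨[], by intro a ha; simp at ha, wordProd_nil, by simp [invNum_one]⟩
  | succ N ih =>
    intro w hw
    by_cases h0 : invNum n w = 0
    · have : w = 1 := eq_one_of_invNum_eq_zero h0
      subst this
      exact ⟨[], by intro a ha; simp at ha, wordProd_nil, by simp [invNum_one]⟩
    · have hw1 : w ≠ 1 := fun hc => h0 (by rw [hc, invNum_one])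
      obtain ⟨a, h, hd⟩ := exists_descent hw1
      have hdec := invNum_mul_sTr_of_gt h w hd
      obtain ⟨l, hl1, hl2, hl3⟩ := ih (w * sTr n a) (by omega)
      refine ⟨l ++ [a], ?_, ?_, ?_⟩
      · intro b hb
        rcases List.mem_append.1 hb with hb | hb
        · exact hl1 b hb
        · simp at hb; subst hb; exact h
      · rw [wordProd_concat, hl2, mul_assoc, sTr_mul_self, mul_one]
      · simp [hl3]; omega

lemma len_eq_invNum (w : Perm (Fin n)) : len n w = invNum n w := by
  have hmem : invNum n w ∈ {k | ∃ l : List ℕ, IsWord n l ∧ wordProd n l = w ∧ l.length = k} := by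
    obtain ⟨l, h1, h2, h3⟩ := exists_word_invNum (invNum n w) w le_rfl
    exact ⟨l, h1, h2, h3⟩
  apply Nat.le_antisymm
  · exact Nat.sInf_le hmem
  · apply le_csInf ⟨_, hmem⟩
    rintro k ⟨l, -, hl2, hl3⟩
    rw [← hl2, ← hl3]
    exact invNum_wordProd_le l

lemma isReducedWord_iff (l : List ℕ) (w : Perm (Fin n)) :
    IsReducedWord n l w ↔ IsWord n l ∧ wordProd n l = w ∧ l.length = invNum n w := by
  constructor
  · rintro ⟨h1, h2, h3⟩
    refine ⟨h1, h2, Nat.le_antisymm ?_ ?_⟩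
    · obtain ⟨m, hm1, hm2, hm3⟩ := exists_word_invNum (invNum n w) w le_rfl
      exact hm3 ▸ h3 m hm1 hm2
    · rw [← h2]; exact invNum_wordProd_le l
  · rintro ⟨h1, h2, h3⟩
    refine ⟨h1, h2, fun l' hl' hl'2 => ?_⟩
    rw [h3, ← hl'2]
    exact invNum_wordProd_le l'

lemma exists_isReducedWord (w : Perm (Fin n)) : ∃ l, IsReducedWord n l w := by
  obtain ⟨l, h1, h2, h3⟩ := exists_word_invNum (invNum n w) w le_rfl
  exact ⟨l, (isReducedWord_iff l w).2 ⟨h1, h2, h3⟩⟩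

lemma redWord_isReduced (w : Perm (Fin n)) : IsReducedWord n (redWord n w) w := by
  rw [redWord, dif_pos (exists_isReducedWord w)]
  exact (exists_isReducedWord w).choose_spec

lemma demStep_of_lt {a : ℕ} (h : a + 1 < n) (u : Perm (Fin n))
    (hv : u ⟨a, Nat.lt_of_succ_lt h⟩ < u ⟨a + 1, h⟩) :
    demStep n u a = u * sTr n a := by
  rw [demStep, if_pos]
  rw [len_eq_invNum, len_eq_invNum, invNum_mul_sTr_of_lt h u hv]

lemma demStep_of_gt {a : ℕ} (h : a + 1 < n) (u : Perm (Fin n))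
    (hv : u ⟨a + 1, h⟩ < u ⟨a, Nat.lt_of_succ_lt h⟩) :
    demStep n u a = u := by
  rw [demStep, if_neg]
  rw [len_eq_invNum, len_eq_invNum]
  have := invNum_mul_sTr_of_gt h u hv
  omega

lemma demStep_of_ge {a : ℕ} (h : ¬ a + 1 < n) (u : Perm (Fin n)) :
    demStep n u a = u := by
  rw [demStep, if_neg]
  rw [len_eq_invNum, len_eq_invNum, sTr_of_ge h, mul_one]
  omega

lemma demStep_lt' {a : ℕ} (h : a + 1 < n) (u : Perm (Fin n)) (x y : Fin n)
    (hx : (x : ℕ) = a) (hy : (y : ℕ) = a + 1) (hv : u x < u y) :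
    demStep n u a = u * sTr n a := by
  apply demStep_of_lt h
  have ex : x = ⟨a, Nat.lt_of_succ_lt h⟩ := Fin.ext hx
  have ey : y = ⟨a + 1, h⟩ := Fin.ext hy
  rwa [ex, ey] at hv

lemma demStep_gt' {a : ℕ} (h : a + 1 < n) (u : Perm (Fin n)) (x y : Fin n)
    (hx : (x : ℕ) = a) (hy : (y : ℕ) = a + 1) (hv : u y < u x) :
    demStep n u a = u := by
  apply demStep_of_gt h
  have ex : x = ⟨a, Nat.lt_of_succ_lt h⟩ := Fin.ext hx
  have ey : y = ⟨a + 1, h⟩ := Fin.ext hy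
  rwa [ex, ey] at hv

/-- Folding the Demazure step over a word, starting from `u`. -/
noncomputable def dfold (n : ℕ) (u : Equiv.Perm (Fin n)) (l : List ℕ) : Equiv.Perm (Fin n) :=
  l.foldl (demStep n) u

lemma dfold_nil (u : Perm (Fin n)) : dfold n u [] = u := rfl

lemma dfold_cons (u : Perm (Fin n)) (a : ℕ) (t : List ℕ) :
    dfold n u (a :: t) = dfold n (demStep n u a) t := rfl

lemma dfold_append (u : Perm (Fin n)) (l1 l2 : List ℕ) :
    dfold n u (l1 ++ l2) = dfold n (dfold n u l1) l2 := List.foldl_append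

lemma dfold_concat (u : Perm (Fin n)) (t : List ℕ) (a : ℕ) :
    dfold n u (t ++ [a]) = demStep n (dfold n u t) a := by
  rw [dfold_append]; rfl

lemma demWord_eq_dfold (l : List ℕ) : demWord n l = dfold n 1 l := rfl

lemma dfold_of_add (l : List ℕ) (u : Perm (Fin n))
    (h : invNum n (u * wordProd n l) = invNum n u + l.length) :
    dfold n u l = u * wordProd n l := by
  induction l generalizing u with
  | nil => rw [dfold_nil, wordProd_nil, mul_one]
  | cons a t ih =>
    rw [wordProd_cons, ← mul_assoc] at h
    simp only [List.length_cons] at h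
    have hub := invNum_mul_wordProd_le t (u * sTr n a)
    have hle := invNum_mul_sTr_le u a
    have hstep : invNum n (u * sTr n a) = invNum n u + 1 := by omega
    have hvalid : a + 1 < n := by
      by_contra hc
      rw [sTr_of_ge hc, mul_one] at hstep; omega
    have hv : u ⟨a, Nat.lt_of_succ_lt hvalid⟩ < u ⟨a + 1, hvalid⟩ := by
      rcases lt_trichotomy (u ⟨a, Nat.lt_of_succ_lt hvalid⟩) (u ⟨a + 1, hvalid⟩) with h' | h' | h'
      · exact h'
      · exact absurd (u.injective h') (by simp [Fin.ext_iff])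
      · have := invNum_mul_sTr_of_gt hvalid u h'; omega
    rw [dfold_cons, demStep_of_lt hvalid u hv, ih _ (by omega)]
    rw [wordProd_cons, ← mul_assoc]

lemma dfold_one_red {l : List ℕ} {w : Perm (Fin n)} (hl : IsReducedWord n l w) :
    dfold n 1 l = w := by
  rw [isReducedWord_iff] at hl
  obtain ⟨h1, h2, h3⟩ := hl
  have := dfold_of_add l 1 (by rw [one_mul, h2, invNum_one, h3, Nat.zero_add])
  rwa [one_mul, h2] at this

lemma invNum_sTr_mul_le (w : Perm (Fin n)) (a : ℕ) :
    invNum n (sTr n a * w) ≤ invNum n w + 1 := by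
  have := invNum_mul_sTr_le w⁻¹ a
  have e : (w⁻¹ * sTr n a)⁻¹ = sTr n a * w := by rw [mul_inv_rev, sTr_inv, inv_inv]
  rw [← invNum_inv (w⁻¹ * sTr n a), e, invNum_inv] at this
  exact this

lemma invNum_sTr_mul_of_gt {a : ℕ} (h : a + 1 < n) (w : Perm (Fin n))
    (hv : w⁻¹ ⟨a + 1, h⟩ < w⁻¹ ⟨a, Nat.lt_of_succ_lt h⟩) :
    invNum n w = invNum n (sTr n a * w) + 1 := by
  have := invNum_mul_sTr_of_gt h w⁻¹ hv
  have e : (w⁻¹ * sTr n a)⁻¹ = sTr n a * w := by rw [mul_inv_rev, sTr_inv, inv_inv]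
  rw [← invNum_inv (w⁻¹ * sTr n a), e] at this
  rw [← invNum_inv w]
  exact this

lemma invNum_sTr_mul_of_lt {a : ℕ} (h : a + 1 < n) (w : Perm (Fin n))
    (hv : w⁻¹ ⟨a, Nat.lt_of_succ_lt h⟩ < w⁻¹ ⟨a + 1, h⟩) :
    invNum n (sTr n a * w) = invNum n w + 1 := by
  have := invNum_mul_sTr_of_lt h w⁻¹ hv
  have e : (w⁻¹ * sTr n a)⁻¹ = sTr n a * w := by rw [mul_inv_rev, sTr_inv, inv_inv]
  rw [← invNum_inv (w⁻¹ * sTr n a), e, invNum_inv] at this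
  exact this

lemma left_descent_iff {a : ℕ} (h : a + 1 < n) (w : Perm (Fin n)) :
    invNum n (sTr n a * w) + 1 = invNum n w ↔
      w⁻¹ ⟨a + 1, h⟩ < w⁻¹ ⟨a, Nat.lt_of_succ_lt h⟩ := by
  constructor
  · intro hd
    rcases lt_trichotomy (w⁻¹ ⟨a + 1, h⟩) (w⁻¹ ⟨a, Nat.lt_of_succ_lt h⟩) with h' | h' | h'
    · exact h'
    · exact absurd (w⁻¹.injective h') (by simp [Fin.ext_iff])
    · have := invNum_sTr_mul_of_lt h w (by exact h'); omega
  · intro hv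
    have := invNum_sTr_mul_of_gt h w hv; omega

lemma right_descent_iff {a : ℕ} (h : a + 1 < n) (w : Perm (Fin n)) :
    invNum n (w * sTr n a) + 1 = invNum n w ↔
      w ⟨a + 1, h⟩ < w ⟨a, Nat.lt_of_succ_lt h⟩ := by
  constructor
  · intro hd
    rcases lt_trichotomy (w ⟨a + 1, h⟩) (w ⟨a, Nat.lt_of_succ_lt h⟩) with h' | h' | h'
    · exact h'
    · exact absurd (w.injective h') (by simp [Fin.ext_iff])
    · have := invNum_mul_sTr_of_lt h w h'; omega
  · intro hv
    have := invNum_mul_sTr_of_gt h w hv; omega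

lemma isRed_cons_of {a : ℕ} {t : List ℕ} {w : Perm (Fin n)} (h : a + 1 < n)
    (hd : invNum n (sTr n a * w) + 1 = invNum n w)
    (ht : IsReducedWord n t (sTr n a * w)) : IsReducedWord n (a :: t) w := by
  rw [isReducedWord_iff] at ht ⊢
  obtain ⟨h1, h2, h3⟩ := ht
  refine ⟨?_, ?_, ?_⟩
  · intro b hb
    rcases List.mem_cons.1 hb with hb | hb
    · subst hb; exact h
    · exact h1 b hb
  · rw [wordProd_cons, h2, ← mul_assoc, sTr_mul_self, one_mul]
  · simp only [List.length_cons, h3]; omega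

lemma isRed_of_cons {a : ℕ} {t : List ℕ} {w : Perm (Fin n)}
    (hr : IsReducedWord n (a :: t) w) :
    a + 1 < n ∧ invNum n (sTr n a * w) + 1 = invNum n w ∧
      IsReducedWord n t (sTr n a * w) := by
  rw [isReducedWord_iff] at hr
  obtain ⟨h1, h2, h3⟩ := hr
  have ha : a + 1 < n := h1 a List.mem_cons_self
  have hw : wordProd n t = sTr n a * w := by
    rw [← h2, wordProd_cons, ← mul_assoc, sTr_mul_self, one_mul]
  have hub : invNum n (sTr n a * w) ≤ t.length := hw ▸ invNum_wordProd_le t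
  have hlb : invNum n w ≤ invNum n (sTr n a * w) + 1 := by
    have e : w = sTr n a * (sTr n a * w) := by rw [← mul_assoc, sTr_mul_self, one_mul]
    calc invNum n w = invNum n (sTr n a * (sTr n a * w)) := by rw [← e]
      _ ≤ invNum n (sTr n a * w) + 1 := invNum_sTr_mul_le _ a
  simp only [List.length_cons] at h3
  have hd : invNum n (sTr n a * w) + 1 = invNum n w := by omega
  refine ⟨ha, hd, ?_⟩
  rw [isReducedWord_iff]
  refine ⟨fun b hb => h1 b (List.mem_cons_of_mem a hb), hw, by omega⟩

lemma sTr_comm {a b : ℕ} (hab : a + 2 ≤ b) :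
    sTr n a * sTr n b = sTr n b * sTr n a := by
  by_cases ha : a + 1 < n
  · by_cases hb : b + 1 < n
    · ext x
      simp only [Perm.mul_apply]
      rw [sTr_val ha, sTr_val hb, sTr_val hb, sTr_val ha]
      have := x.isLt
      split_ifs <;> omega
    · rw [sTr_of_ge hb, mul_one, one_mul]
  · rw [sTr_of_ge ha, mul_one, one_mul]

set_option maxHeartbeats 1000000 in
lemma sTr_braid {a : ℕ} (h : a + 2 < n) :
    sTr n a * (sTr n (a + 1) * sTr n a) = sTr n (a + 1) * (sTr n a * sTr n (a + 1)) := by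
  have h1 : a + 1 < n := by omega
  have h2 : a + 1 + 1 < n := by omega
  ext x
  simp only [Perm.mul_apply]
  rw [sTr_val h1, sTr_val h2, sTr_val h1, sTr_val h2, sTr_val h1, sTr_val h2]
  have := x.isLt
  split_ifs <;> omega

lemma demStep_comm (u : Perm (Fin n)) {a b : ℕ} (hab : a + 2 ≤ b) :
    demStep n (demStep n u a) b = demStep n (demStep n u b) a := by
  by_cases ha : a + 1 < n
  · by_cases hb : b + 1 < n
    · set pa : Fin n := ⟨a, Nat.lt_of_succ_lt ha⟩ with hpa
      set pa1 : Fin n := ⟨a + 1, ha⟩ with hpa1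
      set pb : Fin n := ⟨b, Nat.lt_of_succ_lt hb⟩ with hpb
      set pb1 : Fin n := ⟨b + 1, hb⟩ with hpb1
      have vpa : (pa : ℕ) = a := rfl
      have vpa1 : (pa1 : ℕ) = a + 1 := rfl
      have vpb : (pb : ℕ) = b := rfl
      have vpb1 : (pb1 : ℕ) = b + 1 := rfl
      have sa_pb : sTr n a pb = pb := sTr_other ha (by rw [vpb]; omega) (by rw [vpb]; omega)
      have sa_pb1 : sTr n a pb1 = pb1 :=
        sTr_other ha (by rw [vpb1]; omega) (by rw [vpb1]; omega)
      have sb_pa : sTr n b pa = pa := sTr_other hb (by rw [vpa]; omega) (by rw [vpa]; omega)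
      have sb_pa1 : sTr n b pa1 = pa1 :=
        sTr_other hb (by rw [vpa1]; omega) (by rw [vpa1]; omega)
      have hija : u pa ≠ u pa1 := fun hc => by
        have h' := congrArg Fin.val (u.injective hc)
        rw [vpa, vpa1] at h'; omega
      have hijb : u pb ≠ u pb1 := fun hc => by
        have h' := congrArg Fin.val (u.injective hc)
        rw [vpb, vpb1] at h'; omega
      rcases lt_or_gt_of_ne hija with hA | hA <;> rcases lt_or_gt_of_ne hijb with hB | hB
      · have eL : demStep n (demStep n u a) b = u * sTr n a * sTr n b := by
          rw [demStep_lt' ha u pa pa1 rfl rfl hA]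
          exact demStep_lt' hb (u * sTr n a) pb pb1 rfl rfl
            (by rw [mul_sTr_apply, mul_sTr_apply, sa_pb, sa_pb1]; exact hB)
        have eR : demStep n (demStep n u b) a = u * sTr n b * sTr n a := by
          rw [demStep_lt' hb u pb pb1 rfl rfl hB]
          exact demStep_lt' ha (u * sTr n b) pa pa1 rfl rfl
            (by rw [mul_sTr_apply, mul_sTr_apply, sb_pa, sb_pa1]; exact hA)
        rw [eL, eR, mul_assoc, mul_assoc, sTr_comm hab]
      · have eL : demStep n (demStep n u a) b = u * sTr n a := by
          rw [demStep_lt' ha u pa pa1 rfl rfl hA]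
          exact demStep_gt' hb (u * sTr n a) pb pb1 rfl rfl
            (by rw [mul_sTr_apply, mul_sTr_apply, sa_pb, sa_pb1]; exact hB)
        have eR : demStep n (demStep n u b) a = u * sTr n a := by
          rw [demStep_gt' hb u pb pb1 rfl rfl hB]
          exact demStep_lt' ha u pa pa1 rfl rfl hA
        rw [eL, eR]
      · have eL : demStep n (demStep n u a) b = u * sTr n b := by
          rw [demStep_gt' ha u pa pa1 rfl rfl hA]
          exact demStep_lt' hb u pb pb1 rfl rfl hB
        have eR : demStep n (demStep n u b) a = u * sTr n b := by
          rw [demStep_lt' hb u pb pb1 rfl rfl hB]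
          exact demStep_gt' ha (u * sTr n b) pa pa1 rfl rfl
            (by rw [mul_sTr_apply, mul_sTr_apply, sb_pa, sb_pa1]; exact hA)
        rw [eL, eR]
      · have eL : demStep n (demStep n u a) b = u := by
          rw [demStep_gt' ha u pa pa1 rfl rfl hA]
          exact demStep_gt' hb u pb pb1 rfl rfl hB
        have eR : demStep n (demStep n u b) a = u := by
          rw [demStep_gt' hb u pb pb1 rfl rfl hB]
          exact demStep_gt' ha u pa pa1 rfl rfl hA
        rw [eL, eR]
    · rw [demStep_of_ge hb, demStep_of_ge hb]
  · rw [demStep_of_ge ha, demStep_of_ge ha]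

lemma demStep_braid (u : Perm (Fin n)) {a : ℕ} (h : a + 2 < n) :
    demStep n (demStep n (demStep n u a) (a + 1)) a
      = demStep n (demStep n (demStep n u (a + 1)) a) (a + 1) := by
  have h1 : a + 1 < n := by omega
  have h2 : a + 1 + 1 < n := by omega
  set pa : Fin n := ⟨a, Nat.lt_of_succ_lt h1⟩ with hpa
  set pb : Fin n := ⟨a + 1, h1⟩ with hpb
  set pc : Fin n := ⟨a + 1 + 1, h2⟩ with hpc
  have vpa : (pa : ℕ) = a := rfl
  have vpb : (pb : ℕ) = a + 1 := rfl
  have vpc : (pc : ℕ) = a + 1 + 1 := rfl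
  have sa_pa : sTr n a pa = pb := by
    apply Fin.ext; rw [sTr_val h1, vpa, vpb]; simp
  have sa_pb : sTr n a pb = pa := by
    apply Fin.ext; rw [sTr_val h1, vpb, vpa]; simp
  have sa_pc : sTr n a pc = pc := sTr_other h1 (by rw [vpc]; omega) (by rw [vpc]; omega)
  have sb_pa : sTr n (a + 1) pa = pa :=
    sTr_other h2 (by rw [vpa]; omega) (by rw [vpa]; omega)
  have sb_pb : sTr n (a + 1) pb = pc := by
    apply Fin.ext; rw [sTr_val h2, vpb, vpc]; simp
  have sb_pc : sTr n (a + 1) pc = pb := by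
    apply Fin.ext; rw [sTr_val h2, vpc, vpb]; simp
  have hab : u pa ≠ u pb := fun hc => by
    have h' := congrArg Fin.val (u.injective hc); rw [vpa, vpb] at h'; omega
  have hbc : u pb ≠ u pc := fun hc => by
    have h' := congrArg Fin.val (u.injective hc); rw [vpb, vpc] at h'; omega
  have hac : u pa ≠ u pc := fun hc => by
    have h' := congrArg Fin.val (u.injective hc); rw [vpa, vpc] at h'; omega
  rcases lt_or_gt_of_ne hab with h01 | h01 <;>
    rcases lt_or_gt_of_ne hbc with h12 | h12 <;>
    rcases lt_or_gt_of_ne hac with h02 | h02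
  · -- (<,<,<)
    have eL : demStep n (demStep n (demStep n u a) (a + 1)) a
        = u * sTr n a * sTr n (a + 1) * sTr n a := by
      rw [demStep_lt' h1 u pa pb rfl rfl h01,
        demStep_lt' h2 (u * sTr n a) pb pc rfl rfl
          (by rw [mul_sTr_apply, mul_sTr_apply, sa_pb, sa_pc]; exact h02)]
      exact demStep_lt' h1 (u * sTr n a * sTr n (a + 1)) pa pb rfl rfl
        (by rw [mul_sTr_apply, mul_sTr_apply, mul_sTr_apply, mul_sTr_apply,
          sb_pa, sb_pb, sa_pa, sa_pc]; exact h12)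
    have eR : demStep n (demStep n (demStep n u (a + 1)) a) (a + 1)
        = u * sTr n (a + 1) * sTr n a * sTr n (a + 1) := by
      rw [demStep_lt' h2 u pb pc rfl rfl h12,
        demStep_lt' h1 (u * sTr n (a + 1)) pa pb rfl rfl
          (by rw [mul_sTr_apply, mul_sTr_apply, sb_pa, sb_pb]; exact h02)]
      exact demStep_lt' h2 (u * sTr n (a + 1) * sTr n a) pb pc rfl rfl
        (by rw [mul_sTr_apply, mul_sTr_apply, mul_sTr_apply, mul_sTr_apply,
          sa_pb, sa_pc, sb_pa, sb_pc]; exact h01)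
    rw [eL, eR]
    simp only [mul_assoc]
    rw [sTr_braid h]
  · exact absurd (lt_trans h01 h12) (not_lt.2 h02.le)
  · -- (<,>,<) : (1,3,2)
    have eL : demStep n (demStep n (demStep n u a) (a + 1)) a
        = u * sTr n a * sTr n (a + 1) := by
      rw [demStep_lt' h1 u pa pb rfl rfl h01,
        demStep_lt' h2 (u * sTr n a) pb pc rfl rfl
          (by rw [mul_sTr_apply, mul_sTr_apply, sa_pb, sa_pc]; exact h02)]
      exact demStep_gt' h1 (u * sTr n a * sTr n (a + 1)) pa pb rfl rfl
        (by rw [mul_sTr_apply, mul_sTr_apply, mul_sTr_apply, mul_sTr_apply,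
          sb_pa, sb_pb, sa_pa, sa_pc]; exact h12)
    have eR : demStep n (demStep n (demStep n u (a + 1)) a) (a + 1)
        = u * sTr n a * sTr n (a + 1) := by
      rw [demStep_gt' h2 u pb pc rfl rfl h12,
        demStep_lt' h1 u pa pb rfl rfl h01]
      exact demStep_lt' h2 (u * sTr n a) pb pc rfl rfl
        (by rw [mul_sTr_apply, mul_sTr_apply, sa_pb, sa_pc]; exact h02)
    rw [eL, eR]
  · -- (<,>,>) : (2,3,1)
    have eL : demStep n (demStep n (demStep n u a) (a + 1)) a = u * sTr n a := by
      rw [demStep_lt' h1 u pa pb rfl rfl h01,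
        demStep_gt' h2 (u * sTr n a) pb pc rfl rfl
          (by rw [mul_sTr_apply, mul_sTr_apply, sa_pb, sa_pc]; exact h02)]
      exact demStep_gt' h1 (u * sTr n a) pa pb rfl rfl
        (by rw [mul_sTr_apply, mul_sTr_apply, sa_pa, sa_pb]; exact h01)
    have eR : demStep n (demStep n (demStep n u (a + 1)) a) (a + 1) = u * sTr n a := by
      rw [demStep_gt' h2 u pb pc rfl rfl h12,
        demStep_lt' h1 u pa pb rfl rfl h01]
      exact demStep_gt' h2 (u * sTr n a) pb pc rfl rfl
        (by rw [mul_sTr_apply, mul_sTr_apply, sa_pb, sa_pc]; exact h02)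
    rw [eL, eR]
  · -- (>,<,<) : (2,1,3)
    have eL : demStep n (demStep n (demStep n u a) (a + 1)) a
        = u * sTr n (a + 1) * sTr n a := by
      rw [demStep_gt' h1 u pa pb rfl rfl h01,
        demStep_lt' h2 u pb pc rfl rfl h12]
      exact demStep_lt' h1 (u * sTr n (a + 1)) pa pb rfl rfl
        (by rw [mul_sTr_apply, mul_sTr_apply, sb_pa, sb_pb]; exact h02)
    have eR : demStep n (demStep n (demStep n u (a + 1)) a) (a + 1)
        = u * sTr n (a + 1) * sTr n a := by
      rw [demStep_lt' h2 u pb pc rfl rfl h12,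
        demStep_lt' h1 (u * sTr n (a + 1)) pa pb rfl rfl
          (by rw [mul_sTr_apply, mul_sTr_apply, sb_pa, sb_pb]; exact h02)]
      exact demStep_gt' h2 (u * sTr n (a + 1) * sTr n a) pb pc rfl rfl
        (by rw [mul_sTr_apply, mul_sTr_apply, mul_sTr_apply, mul_sTr_apply,
          sa_pb, sa_pc, sb_pa, sb_pc]; exact h01)
    rw [eL, eR]
  · -- (>,<,>) : (3,1,2)
    have eL : demStep n (demStep n (demStep n u a) (a + 1)) a = u * sTr n (a + 1) := by
      rw [demStep_gt' h1 u pa pb rfl rfl h01,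
        demStep_lt' h2 u pb pc rfl rfl h12]
      exact demStep_gt' h1 (u * sTr n (a + 1)) pa pb rfl rfl
        (by rw [mul_sTr_apply, mul_sTr_apply, sb_pa, sb_pb]; exact h02)
    have eR : demStep n (demStep n (demStep n u (a + 1)) a) (a + 1) = u * sTr n (a + 1) := by
      rw [demStep_lt' h2 u pb pc rfl rfl h12,
        demStep_gt' h1 (u * sTr n (a + 1)) pa pb rfl rfl
          (by rw [mul_sTr_apply, mul_sTr_apply, sb_pa, sb_pb]; exact h02)]
      exact demStep_gt' h2 (u * sTr n (a + 1)) pb pc rfl rfl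
        (by rw [mul_sTr_apply, mul_sTr_apply, sb_pb, sb_pc]; exact h12)
    rw [eL, eR]
  · exact absurd (lt_trans h12 h01) (not_lt.2 h02.le)
  · -- (>,>,>)
    have eL : demStep n (demStep n (demStep n u a) (a + 1)) a = u := by
      rw [demStep_gt' h1 u pa pb rfl rfl h01,
        demStep_gt' h2 u pb pc rfl rfl h12]
      exact demStep_gt' h1 u pa pb rfl rfl h01
    have eR : demStep n (demStep n (demStep n u (a + 1)) a) (a + 1) = u := by
      rw [demStep_gt' h2 u pb pc rfl rfl h12,
        demStep_gt' h1 u pa pb rfl rfl h01]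
      exact demStep_gt' h2 u pb pc rfl rfl h12
    rw [eL, eR]

lemma inv_sTr_mul (a : ℕ) (w : Perm (Fin n)) :
    (sTr n a * w)⁻¹ = w⁻¹ * sTr n a := by rw [mul_inv_rev, sTr_inv]

lemma sTr_eq_of_val {a : ℕ} (h : a + 1 < n) {x y : Fin n}
    (hxy : (if (x : ℕ) = a then a + 1 else if (x : ℕ) = a + 1 then a else (x : ℕ)) = (y : ℕ)) :
    sTr n a x = y := Fin.ext (by rw [sTr_val h]; exact hxy)

lemma dfold_red_eq : ∀ (N : ℕ) (w : Perm (Fin n)), invNum n w ≤ N →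
    ∀ (u : Perm (Fin n)) (l l' : List ℕ), IsReducedWord n l w → IsReducedWord n l' w →
    dfold n u l = dfold n u l' := by
  intro N
  induction N with
  | zero =>
    intro w hw u l l' hl hl'
    have h3 := ((isReducedWord_iff l w).1 hl).2.2
    have h3' := ((isReducedWord_iff l' w).1 hl').2.2
    have e1 : l = [] := List.length_eq_zero_iff.1 (by omega)
    have e2 : l' = [] := List.length_eq_zero_iff.1 (by omega)
    rw [e1, e2]
  | succ N ih =>
    intro w hw u l l' hl hl'
    have main : ∀ (a b : ℕ) (t t' : List ℕ), a < b →
        IsReducedWord n (a :: t) w → IsReducedWord n (b :: t') w →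
        dfold n u (a :: t) = dfold n u (b :: t') := by
      intro a b t t' hab hra hrb
      obtain ⟨ha, hda, hta⟩ := isRed_of_cons hra
      obtain ⟨hb, hdb, htb⟩ := isRed_of_cons hrb
      have hNa : invNum n (sTr n a * w) ≤ N := by omega
      have hNb : invNum n (sTr n b * w) ≤ N := by omega
      have hva := (left_descent_iff ha w).1 hda
      have hvb := (left_descent_iff hb w).1 hdb
      by_cases hadj : b = a + 1
      · -- braid case
        subst hadj
        have hbn : a + 2 < n := by omega
        obtain ⟨t3, ht3⟩ :=
          exists_isReducedWord (sTr n a * (sTr n (a + 1) * (sTr n a * w)))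
        have d2 : invNum n (sTr n (a + 1) * (sTr n a * w)) + 1
            = invNum n (sTr n a * w) := by
          rw [left_descent_iff hb, inv_sTr_mul, mul_sTr_apply, mul_sTr_apply]
          have e1 : sTr n a ⟨a + 1 + 1, hb⟩ = (⟨a + 1 + 1, hb⟩ : Fin n) :=
            sTr_eq_of_val ha (by show (if a + 1 + 1 = a then a + 1 else
              if a + 1 + 1 = a + 1 then a else a + 1 + 1) = a + 1 + 1; split_ifs <;> omega)
          have e2 : sTr n a ⟨a + 1, Nat.lt_of_succ_lt hb⟩
              = (⟨a, Nat.lt_of_succ_lt (Nat.lt_of_succ_lt hb)⟩ : Fin n) :=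
            sTr_eq_of_val ha (by show (if a + 1 = a then a + 1 else
              if a + 1 = a + 1 then a else a + 1) = a; split_ifs <;> omega)
          rw [e1, e2]
          exact lt_trans hvb hva
        have d3 : invNum n (sTr n a * (sTr n (a + 1) * (sTr n a * w))) + 1
            = invNum n (sTr n (a + 1) * (sTr n a * w)) := by
          rw [left_descent_iff ha, inv_sTr_mul, inv_sTr_mul]
          rw [mul_sTr_apply, mul_sTr_apply, mul_sTr_apply, mul_sTr_apply]
          have e1 : sTr n (a + 1) ⟨a + 1, ha⟩
              = (⟨a + 1 + 1, hb⟩ : Fin n) :=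
            sTr_eq_of_val hb (by show (if a + 1 = a + 1 then a + 1 + 1 else
              if a + 1 = a + 1 + 1 then a + 1 else a + 1) = a + 1 + 1; split_ifs <;> omega)
          have e2 : sTr n (a + 1) ⟨a, Nat.lt_of_succ_lt ha⟩
              = (⟨a, Nat.lt_of_succ_lt ha⟩ : Fin n) :=
            sTr_eq_of_val hb (by show (if a = a + 1 then a + 1 + 1 else
              if a = a + 1 + 1 then a + 1 else a) = a; split_ifs <;> omega)
          have e3 : sTr n a ⟨a + 1 + 1, hb⟩ = (⟨a + 1 + 1, hb⟩ : Fin n) :=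
            sTr_eq_of_val ha (by show (if a + 1 + 1 = a then a + 1 else
              if a + 1 + 1 = a + 1 then a else a + 1 + 1) = a + 1 + 1; split_ifs <;> omega)
          have e4 : sTr n a ⟨a, Nat.lt_of_succ_lt ha⟩ = (⟨a + 1, ha⟩ : Fin n) :=
            sTr_eq_of_val ha (by show (if a = a then a + 1 else
              if a = a + 1 then a else a) = a + 1; split_ifs <;> omega)
          rw [e1, e2, e3, e4]
          exact hvb
        have d2' : invNum n (sTr n a * (sTr n (a + 1) * w)) + 1
            = invNum n (sTr n (a + 1) * w) := by
          rw [left_descent_iff ha, inv_sTr_mul, mul_sTr_apply, mul_sTr_apply]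
          have e1 : sTr n (a + 1) ⟨a + 1, ha⟩ = (⟨a + 1 + 1, hb⟩ : Fin n) :=
            sTr_eq_of_val hb (by show (if a + 1 = a + 1 then a + 1 + 1 else
              if a + 1 = a + 1 + 1 then a + 1 else a + 1) = a + 1 + 1; split_ifs <;> omega)
          have e2 : sTr n (a + 1) ⟨a, Nat.lt_of_succ_lt ha⟩
              = (⟨a, Nat.lt_of_succ_lt ha⟩ : Fin n) :=
            sTr_eq_of_val hb (by show (if a = a + 1 then a + 1 + 1 else
              if a = a + 1 + 1 then a + 1 else a) = a; split_ifs <;> omega)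
          rw [e1, e2]
          exact lt_trans hvb hva
        have d3' : invNum n (sTr n (a + 1) * (sTr n a * (sTr n (a + 1) * w))) + 1
            = invNum n (sTr n a * (sTr n (a + 1) * w)) := by
          rw [left_descent_iff hb, inv_sTr_mul, inv_sTr_mul]
          rw [mul_sTr_apply, mul_sTr_apply, mul_sTr_apply, mul_sTr_apply]
          have e1 : sTr n a ⟨a + 1 + 1, hb⟩ = (⟨a + 1 + 1, hb⟩ : Fin n) :=
            sTr_eq_of_val ha (by show (if a + 1 + 1 = a then a + 1 else
              if a + 1 + 1 = a + 1 then a else a + 1 + 1) = a + 1 + 1; split_ifs <;> omega)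
          have e2 : sTr n a ⟨a + 1, Nat.lt_of_succ_lt hb⟩
              = (⟨a, Nat.lt_of_succ_lt ha⟩ : Fin n) :=
            sTr_eq_of_val ha (by show (if a + 1 = a then a + 1 else
              if a + 1 = a + 1 then a else a + 1) = a; split_ifs <;> omega)
          have e3 : sTr n (a + 1) ⟨a + 1 + 1, hb⟩ = (⟨a + 1, ha⟩ : Fin n) :=
            sTr_eq_of_val hb (by show (if a + 1 + 1 = a + 1 then a + 1 + 1 else
              if a + 1 + 1 = a + 1 + 1 then a + 1 else a + 1 + 1) = a + 1; split_ifs <;> omega)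
          have e4 : sTr n (a + 1) ⟨a, Nat.lt_of_succ_lt ha⟩
              = (⟨a, Nat.lt_of_succ_lt ha⟩ : Fin n) :=
            sTr_eq_of_val hb (by show (if a = a + 1 then a + 1 + 1 else
              if a = a + 1 + 1 then a + 1 else a) = a; split_ifs <;> omega)
          rw [e1, e2, e3, e4]
          exact hva
        have braidw : sTr n a * (sTr n (a + 1) * (sTr n a * w))
            = sTr n (a + 1) * (sTr n a * (sTr n (a + 1) * w)) := by
          have := congrArg (· * w) (sTr_braid hbn)
          simpa [mul_assoc] using this
        have rA1 : IsReducedWord n ((a + 1) :: a :: t3) (sTr n a * w) :=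
          isRed_cons_of hb d2 (isRed_cons_of ha d3 ht3)
        have ht3' : IsReducedWord n t3 (sTr n (a + 1) * (sTr n a * (sTr n (a + 1) * w))) := by
          rw [← braidw]; exact ht3
        have rB1 : IsReducedWord n (a :: (a + 1) :: t3) (sTr n (a + 1) * w) :=
          isRed_cons_of ha d2' (isRed_cons_of hb d3' ht3')
        calc dfold n u (a :: t) = dfold n (demStep n u a) t := rfl
          _ = dfold n (demStep n u a) ((a + 1) :: a :: t3) :=
              ih (sTr n a * w) hNa _ t _ hta rA1
          _ = dfold n (demStep n (demStep n (demStep n u a) (a + 1)) a) t3 := rfl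
          _ = dfold n (demStep n (demStep n (demStep n u (a + 1)) a) (a + 1)) t3 := by
              rw [demStep_braid u hbn]
          _ = dfold n (demStep n u (a + 1)) (a :: (a + 1) :: t3) := rfl
          _ = dfold n (demStep n u (a + 1)) t' :=
              ih (sTr n (a + 1) * w) hNb _ _ t' rB1 htb
          _ = dfold n u ((a + 1) :: t') := rfl
      · -- commuting case
        have hab2 : a + 2 ≤ b := by omega
        obtain ⟨t2, ht2⟩ := exists_isReducedWord (sTr n b * (sTr n a * w))
        have d2 : invNum n (sTr n b * (sTr n a * w)) + 1 = invNum n (sTr n a * w) := by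
          rw [left_descent_iff hb, inv_sTr_mul, mul_sTr_apply, mul_sTr_apply]
          have e1 : sTr n a ⟨b + 1, hb⟩ = (⟨b + 1, hb⟩ : Fin n) :=
            sTr_eq_of_val ha (by show (if b + 1 = a then a + 1 else
              if b + 1 = a + 1 then a else b + 1) = b + 1; split_ifs <;> omega)
          have e2 : sTr n a ⟨b, Nat.lt_of_succ_lt hb⟩
              = (⟨b, Nat.lt_of_succ_lt hb⟩ : Fin n) :=
            sTr_eq_of_val ha (by show (if b = a then a + 1 else
              if b = a + 1 then a else b) = b; split_ifs <;> omega)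
          rw [e1, e2]
          exact hvb
        have d2' : invNum n (sTr n a * (sTr n b * w)) + 1 = invNum n (sTr n b * w) := by
          rw [left_descent_iff ha, inv_sTr_mul, mul_sTr_apply, mul_sTr_apply]
          have e1 : sTr n b ⟨a + 1, ha⟩ = (⟨a + 1, ha⟩ : Fin n) :=
            sTr_eq_of_val hb (by show (if a + 1 = b then b + 1 else
              if a + 1 = b + 1 then b else a + 1) = a + 1; split_ifs <;> omega)
          have e2 : sTr n b ⟨a, Nat.lt_of_succ_lt ha⟩
              = (⟨a, Nat.lt_of_succ_lt ha⟩ : Fin n) :=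
            sTr_eq_of_val hb (by show (if a = b then b + 1 else
              if a = b + 1 then b else a) = a; split_ifs <;> omega)
          rw [e1, e2]
          exact hva
        have commw : sTr n a * (sTr n b * w) = sTr n b * (sTr n a * w) := by
          rw [← mul_assoc, sTr_comm hab2, mul_assoc]
        have rA1 : IsReducedWord n (b :: t2) (sTr n a * w) := isRed_cons_of hb d2 ht2
        have ht2' : IsReducedWord n t2 (sTr n a * (sTr n b * w)) := by
          rw [commw]; exact ht2
        have rB1 : IsReducedWord n (a :: t2) (sTr n b * w) := isRed_cons_of ha d2' ht2'
        calc dfold n u (a :: t) = dfold n (demStep n u a) t := rfl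
          _ = dfold n (demStep n u a) (b :: t2) := ih (sTr n a * w) hNa _ t _ hta rA1
          _ = dfold n (demStep n (demStep n u a) b) t2 := rfl
          _ = dfold n (demStep n (demStep n u b) a) t2 := by rw [demStep_comm u hab2]
          _ = dfold n (demStep n u b) (a :: t2) := rfl
          _ = dfold n (demStep n u b) t' := ih (sTr n b * w) hNb _ _ t' rB1 htb
          _ = dfold n u (b :: t') := rfl
    cases l with
    | nil =>
      cases l' with
      | nil => rfl
      | cons b t' =>
        exfalso
        have h3 := ((isReducedWord_iff _ w).1 hl).2.2
        have h3' := ((isReducedWord_iff _ w).1 hl').2.2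
        simp only [List.length_nil, List.length_cons] at h3 h3'
        omega
    | cons a t =>
      cases l' with
      | nil =>
        exfalso
        have h3 := ((isReducedWord_iff _ w).1 hl).2.2
        have h3' := ((isReducedWord_iff _ w).1 hl').2.2
        simp only [List.length_nil, List.length_cons] at h3 h3'
        omega
      | cons b t' =>
        rcases Nat.lt_trichotomy a b with hor | hor | hor
        · exact main a b t t' hor hl hl'
        · subst hor
          obtain ⟨ha, hda, hta⟩ := isRed_of_cons hl
          obtain ⟨-, -, htb⟩ := isRed_of_cons hl'
          exact ih (sTr n a * w) (by omega) (demStep n u a) t t' hta htb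
        · exact (main b a t' t hor hl' hl).symm

/-- The (well-defined) Demazure product of `u` with `w`. -/
noncomputable def ddem (n : ℕ) (u w : Equiv.Perm (Fin n)) : Equiv.Perm (Fin n) :=
  dfold n u (redWord n w)

lemma dfold_red (u : Perm (Fin n)) {w : Perm (Fin n)} {l : List ℕ}
    (hl : IsReducedWord n l w) : dfold n u l = ddem n u w :=
  dfold_red_eq (invNum n w) w le_rfl u l (redWord n w) hl (redWord_isReduced w)

lemma invNum_sTr {a : ℕ} (h : a + 1 < n) : invNum n (sTr n a) = 1 := by
  have := invNum_mul_sTr_of_lt h 1 (by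
    simp only [Perm.one_apply]
    exact Fin.mk_lt_mk.2 (by omega))
  rwa [one_mul, invNum_one] at this

lemma demStep_idem (u : Perm (Fin n)) (a : ℕ) :
    demStep n (demStep n u a) a = demStep n u a := by
  by_cases h : a + 1 < n
  · set pa : Fin n := ⟨a, Nat.lt_of_succ_lt h⟩ with hpa
    set pa1 : Fin n := ⟨a + 1, h⟩ with hpa1
    have hne : u pa ≠ u pa1 := fun hc => by
      have := congrArg Fin.val (u.injective hc)
      simp only [hpa, hpa1] at this
      omega
    rcases lt_or_gt_of_ne hne with hv | hv
    · rw [demStep_of_lt h u hv]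
      apply demStep_gt' h (u * sTr n a) pa pa1 rfl rfl
      rw [mul_sTr_apply, mul_sTr_apply, sTr_left h, sTr_right h]
      exact hv
    · rw [demStep_of_gt h u hv, demStep_of_gt h u hv]
  · rw [demStep_of_ge h, demStep_of_ge h]

lemma isRed_concat_of {a : ℕ} {t : List ℕ} {w : Perm (Fin n)} (h : a + 1 < n)
    (hd : invNum n (w * sTr n a) = invNum n w + 1)
    (ht : IsReducedWord n t w) : IsReducedWord n (t ++ [a]) (w * sTr n a) := by
  rw [isReducedWord_iff] at ht ⊢
  obtain ⟨h1, h2, h3⟩ := ht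
  refine ⟨?_, ?_, ?_⟩
  · intro b hb
    rcases List.mem_append.1 hb with hb | hb
    · exact h1 b hb
    · simp at hb; subst hb; exact h
  · rw [wordProd_concat, h2]
  · simp [h3, hd]

lemma ddem_sTr {a : ℕ} (h : a + 1 < n) (y : Perm (Fin n)) :
    ddem n (sTr n a) y =
      if y⁻¹ ⟨a + 1, h⟩ < y⁻¹ ⟨a, Nat.lt_of_succ_lt h⟩ then y else sTr n a * y := by
  split_ifs with hc
  · have hd : invNum n (sTr n a * y) + 1 = invNum n y := (left_descent_iff h y).2 hc
    obtain ⟨t1, ht1⟩ := exists_isReducedWord (sTr n a * y)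
    have hred : IsReducedWord n (a :: t1) y := isRed_cons_of h hd ht1
    rw [← dfold_red (sTr n a) hred, dfold_cons]
    have hstep : demStep n (sTr n a) a = sTr n a := by
      apply demStep_gt' h (sTr n a) ⟨a, Nat.lt_of_succ_lt h⟩ ⟨a + 1, h⟩ rfl rfl
      rw [sTr_left h, sTr_right h]
      exact Fin.mk_lt_mk.2 (by omega)
    rw [hstep]
    obtain ⟨hw1a, hw1b, hw1c⟩ := (isReducedWord_iff t1 _).1 ht1
    have hsy : sTr n a * wordProd n t1 = y := by
      rw [hw1b, ← mul_assoc, sTr_mul_self, one_mul]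
    have H : invNum n (sTr n a * wordProd n t1)
        = invNum n (sTr n a) + t1.length := by
      rw [hsy, invNum_sTr h, hw1c]; omega
    rw [dfold_of_add t1 (sTr n a) H, hsy]
  · have hval : y⁻¹ ⟨a, Nat.lt_of_succ_lt h⟩ < y⁻¹ ⟨a + 1, h⟩ := by
      rcases lt_trichotomy (y⁻¹ ⟨a, Nat.lt_of_succ_lt h⟩) (y⁻¹ ⟨a + 1, h⟩) with h' | h' | h'
      · exact h'
      · exact absurd (y⁻¹.injective h') (by simp [Fin.ext_iff])
      · exact absurd h' hc
    have hadd : invNum n (sTr n a * y) = invNum n y + 1 := invNum_sTr_mul_of_lt h y hval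
    show dfold n (sTr n a) (redWord n y) = sTr n a * y
    obtain ⟨hr1, hr2, hr3⟩ := (isReducedWord_iff _ _).1 (redWord_isReduced y)
    have H : invNum n (sTr n a * wordProd n (redWord n y))
        = invNum n (sTr n a) + (redWord n y).length := by
      rw [hr2, invNum_sTr h, hr3]; omega
    rw [dfold_of_add _ _ H, hr2]

lemma AStar (l : List ℕ) : ∀ u : Perm (Fin n), dfold n u l = ddem n u (dfold n 1 l) := by
  induction l using List.reverseRecOn with
  | nil =>
    intro u
    rw [dfold_nil, dfold_nil]
    obtain ⟨hr1, hr2, hr3⟩ := (isReducedWord_iff _ _).1 (redWord_isReduced (1 : Perm (Fin n)))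
    have : redWord n (1 : Perm (Fin n)) = [] := by
      apply List.length_eq_zero_iff.1
      rw [hr3, invNum_one]
    show u = dfold n u (redWord n 1)
    rw [this, dfold_nil]
  | append_singleton t a ih =>
    intro u
    rw [dfold_concat, dfold_concat, ih u]
    set v := dfold n 1 t with hv
    by_cases h : a + 1 < n
    · set pa : Fin n := ⟨a, Nat.lt_of_succ_lt h⟩ with hpa
      set pa1 : Fin n := ⟨a + 1, h⟩ with hpa1
      have hne : v pa ≠ v pa1 := fun hc => by
        have := congrArg Fin.val (v.injective hc)
        simp only [hpa, hpa1] at this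
        omega
      rcases lt_or_gt_of_ne hne with hlt | hgt
      · rw [demStep_of_lt h v hlt]
        have hred : IsReducedWord n (redWord n v ++ [a]) (v * sTr n a) :=
          isRed_concat_of h (invNum_mul_sTr_of_lt h v hlt) (redWord_isReduced v)
        calc demStep n (ddem n u v) a
            = demStep n (dfold n u (redWord n v)) a := rfl
          _ = dfold n u (redWord n v ++ [a]) := (dfold_concat _ _ _).symm
          _ = ddem n u (v * sTr n a) := dfold_red u hred
      · rw [demStep_of_gt h v hgt]
        obtain ⟨m, hm⟩ := exists_isReducedWord (v * sTr n a)
        have hd : invNum n (v * sTr n a) + 1 = invNum n v := by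
          have := invNum_mul_sTr_of_gt h v hgt; omega
        have h2 : v * sTr n a * sTr n a = v := by
          rw [mul_assoc, sTr_mul_self, mul_one]
        have hred : IsReducedWord n (m ++ [a]) v := by
          have := isRed_concat_of h (by rw [h2]; omega) hm
          rwa [h2] at this
        have e : ddem n u v = demStep n (dfold n u m) a := by
          rw [← dfold_red u hred, dfold_concat]
        rw [e, demStep_idem]
    · rw [demStep_of_ge h, demStep_of_ge h]

lemma dfold_rev_one (l : List ℕ) : dfold n 1 l.reverse = (dfold n 1 l)⁻¹ := by
  induction l using List.reverseRecOn with
  | nil => rw [List.reverse_nil, dfold_nil, inv_one]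
  | append_singleton t a ih =>
    rw [dfold_concat]
    have erev : (t ++ [a]).reverse = a :: t.reverse := by simp
    rw [erev, dfold_cons]
    set v := dfold n 1 t with hv
    by_cases h : a + 1 < n
    · have step1 : demStep n 1 a = sTr n a := by
        rw [demStep_of_lt h 1 (by
          simp only [Perm.one_apply]
          exact Fin.mk_lt_mk.2 (by omega)), one_mul]
      rw [step1, AStar, ih]
      set pa : Fin n := ⟨a, Nat.lt_of_succ_lt h⟩ with hpa
      set pa1 : Fin n := ⟨a + 1, h⟩ with hpa1
      have hne : v pa ≠ v pa1 := fun hc => by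
        have := congrArg Fin.val (v.injective hc)
        simp only [hpa, hpa1] at this
        omega
      rw [ddem_sTr h v⁻¹]
      rcases lt_or_gt_of_ne hne with hlt | hgt
      · rw [demStep_of_lt h v hlt, if_neg (by rw [inv_inv]; exact fun hc => absurd hlt (not_lt.2 hc.le))]
        rw [mul_inv_rev, sTr_inv]
      · rw [demStep_of_gt h v hgt, if_pos (by rw [inv_inv]; exact hgt)]
    · rw [demStep_of_ge h, demStep_of_ge h, ih]

lemma dfold_rev_self (m : List ℕ) :
    dfold n 1 (m.reverse ++ m) = ddem n (dfold n 1 m)⁻¹ (dfold n 1 m) := by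
  rw [dfold_append, dfold_rev_one, AStar]

lemma sTr_commute {a : ℕ} (h : a + 1 < n) {y : Perm (Fin n)} (hy : y⁻¹ = y)
    (hset : (y ⟨a, Nat.lt_of_succ_lt h⟩ = ⟨a, Nat.lt_of_succ_lt h⟩ ∧ y ⟨a + 1, h⟩ = ⟨a + 1, h⟩)
      ∨ (y ⟨a, Nat.lt_of_succ_lt h⟩ = ⟨a + 1, h⟩ ∧ y ⟨a + 1, h⟩ = ⟨a, Nat.lt_of_succ_lt h⟩)) :
    sTr n a * y = y * sTr n a := by
  set pa : Fin n := ⟨a, Nat.lt_of_succ_lt h⟩ with hpa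
  set pa1 : Fin n := ⟨a + 1, h⟩ with hpa1
  refine Equiv.ext fun x => ?_
  show sTr n a (y x) = y (sTr n a x)
  by_cases hx1 : x = pa
  · subst hx1
    rw [sTr_left h]
    rcases hset with ⟨e1, e2⟩ | ⟨e1, e2⟩
    · rw [e1, e2, sTr_left h]
    · rw [e1, e2, sTr_right h]
  · by_cases hx2 : x = pa1
    · subst hx2
      rw [sTr_right h]
      rcases hset with ⟨e1, e2⟩ | ⟨e1, e2⟩
      · rw [e1, e2, sTr_right h]
      · rw [e1, e2, sTr_left h]
    · have hxv1 : (x : ℕ) ≠ a := fun hc => hx1 (Fin.ext hc)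
      have hxv2 : (x : ℕ) ≠ a + 1 := fun hc => hx2 (Fin.ext hc)
      have hyx1 : y x ≠ pa := by
        intro hc
        have : x = y pa := by
          have := congrArg y hc
          rwa [← Perm.eq_inv_iff_eq, hy] at hc
        rcases hset with ⟨e1, -⟩ | ⟨e1, -⟩
        · exact hx1 (by rw [this, e1])
        · exact hx2 (by rw [this, e1])
      have hyx2 : y x ≠ pa1 := by
        intro hc
        have : x = y pa1 := by rwa [← Perm.eq_inv_iff_eq, hy] at hc
        rcases hset with ⟨-, e2⟩ | ⟨-, e2⟩
        · exact hx2 (by rw [this, e2])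
        · exact hx1 (by rw [this, e2])
      rw [sTr_other h (fun hc => hyx1 (Fin.ext hc)) (fun hc => hyx2 (Fin.ext hc)),
        sTr_other h hxv1 hxv2]

lemma conj_step_involution {a : ℕ} (h : a + 1 < n) {y : Perm (Fin n)} (hy : y⁻¹ = y) :
    (demStep n (ddem n (sTr n a) y) a)⁻¹ = demStep n (ddem n (sTr n a) y) a := by
  set pa : Fin n := ⟨a, Nat.lt_of_succ_lt h⟩ with hpa
  set pa1 : Fin n := ⟨a + 1, h⟩ with hpa1
  rw [ddem_sTr h y, hy]
  by_cases hc : y pa1 < y pa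
  · rw [if_pos hc, demStep_of_gt h y hc, hy]
  · rw [if_neg hc]
    have hne : y pa ≠ y pa1 := fun hc' => by
      have := congrArg Fin.val (y.injective hc')
      simp only [hpa, hpa1] at this
      omega
    have hlt : y pa < y pa1 := by
      rcases lt_or_gt_of_ne hne with h' | h'
      · exact h'
      · exact absurd h' hc
    by_cases hfix : y pa = pa ∧ y pa1 = pa1
    · -- special: `y` fixes both `a` and `a+1`
      have hcomm : sTr n a * y = y * sTr n a := sTr_commute h hy (Or.inl hfix)
      have hstep : demStep n (sTr n a * y) a = sTr n a * y := by
        apply demStep_gt' h (sTr n a * y) pa pa1 rfl rfl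
        show sTr n a (y pa1) < sTr n a (y pa)
        rw [hfix.1, hfix.2, sTr_left h, sTr_right h]
        exact Fin.mk_lt_mk.2 (by omega)
      rw [hstep, mul_inv_rev, sTr_inv, hy, hcomm]
    · -- generic case: result is `sTr ∘ y ∘ sTr`
      have hvlt : (sTr n a (y pa) : ℕ) < (sTr n a (y pa1) : ℕ) := by
        have hno : ¬((y pa : ℕ) = a ∧ (y pa1 : ℕ) = a + 1) := by
          rintro ⟨c1, c2⟩
          exact hfix ⟨Fin.ext c1, Fin.ext c2⟩
        have hpq : (y pa : ℕ) < (y pa1 : ℕ) := hlt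
        rw [sTr_val h, sTr_val h]
        have := (y pa).isLt
        have := (y pa1).isLt
        split_ifs <;> omega
      have hstep : demStep n (sTr n a * y) a = sTr n a * y * sTr n a := by
        apply demStep_lt' h (sTr n a * y) pa pa1 rfl rfl
        exact hvlt
      rw [hstep]
      rw [mul_inv_rev, mul_inv_rev, sTr_inv, hy, mul_assoc]

lemma invWord_involution (m : List ℕ) :
    (dfold n 1 (m.reverse ++ m))⁻¹ = dfold n 1 (m.reverse ++ m) := by
  induction m using List.reverseRecOn with
  | nil => rw [List.reverse_nil, List.nil_append, dfold_nil, inv_one]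
  | append_singleton t a ih =>
    have e : (t ++ [a]).reverse ++ (t ++ [a]) = (a :: (t.reverse ++ t)) ++ [a] := by simp
    rw [e, dfold_concat, dfold_cons]
    by_cases h : a + 1 < n
    · have step1 : demStep n 1 a = sTr n a := by
        rw [demStep_of_lt h 1 (by
          simp only [Perm.one_apply]
          exact Fin.mk_lt_mk.2 (by omega)), one_mul]
      rw [step1, AStar]
      exact conj_step_involution h ih
    · rw [demStep_of_ge h, demStep_of_ge h]
      exact ih

lemma dem_eq_ddem (v w : Perm (Fin n)) : dem n v w = ddem n v w := by
  rw [dem, demWord_eq_dfold, dfold_append, dfold_one_red (redWord_isReduced v)]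
  rfl

lemma ddem_self_involution (w : Perm (Fin n)) : (ddem n w⁻¹ w)⁻¹ = ddem n w⁻¹ w := by
  have hm : dfold n 1 (redWord n w) = w := dfold_one_red (redWord_isReduced w)
  have h1 := dfold_rev_self (n := n) (redWord n w)
  rw [hm] at h1
  rw [← h1]
  exact invWord_involution (n := n) (redWord n w)

lemma exists_atom : ∀ (N : ℕ) (y : Perm (Fin n)), invNum n y ≤ N → y⁻¹ = y →
    ∃ w : Perm (Fin n), ddem n w⁻¹ w = y := by
  intro N
  induction N with
  | zero =>
    intro y hN hy
    have : y = 1 := eq_one_of_invNum_eq_zero (Nat.le_zero.1 hN)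
    subst this
    refine ⟨1, ?_⟩
    rw [inv_one]
    exact dfold_one_red (redWord_isReduced 1)
  | succ N ihN =>
    intro y hN hy
    by_cases h0 : invNum n y = 0
    · have : y = 1 := eq_one_of_invNum_eq_zero h0
      subst this
      refine ⟨1, ?_⟩
      rw [inv_one]
      exact dfold_one_red (redWord_isReduced 1)
    · have hy1 : y ≠ 1 := fun hc => h0 (by rw [hc, invNum_one])
      obtain ⟨a, h, hd⟩ := exists_descent hy1
      set pa : Fin n := ⟨a, Nat.lt_of_succ_lt h⟩ with hpa
      set pa1 : Fin n := ⟨a + 1, h⟩ with hpa1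
      -- `hd : y pa1 < y pa`
      by_cases hsw : y pa = pa1 ∧ y pa1 = pa
      · -- special case: `y` swaps `a` and `a+1`; take `y' = y * sTr`
        have hcomm : sTr n a * y = y * sTr n a := sTr_commute h hy (Or.inr hsw)
        set y' := y * sTr n a with hy'
        have hinv' : y'⁻¹ = y' := by
          rw [hy', mul_inv_rev, sTr_inv, hy, hcomm]
        have hdec : invNum n y' + 1 = invNum n y := by
          rw [hy']
          have := invNum_mul_sTr_of_gt h y hd; omega
        obtain ⟨w', hw'⟩ := ihN y' (by omega) hinv'
        refine ⟨demStep n w' a, ?_⟩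
        have hm : dfold n 1 (redWord n w') = w' := dfold_one_red (redWord_isReduced w')
        have hmm : dfold n 1 (redWord n w' ++ [a]) = demStep n w' a := by
          rw [dfold_concat, hm]
        have h1 := dfold_rev_self (n := n) (redWord n w' ++ [a])
        rw [hmm] at h1
        rw [← h1]
        have e : (redWord n w' ++ [a]).reverse ++ (redWord n w' ++ [a])
            = (a :: ((redWord n w').reverse ++ redWord n w')) ++ [a] := by simp
        rw [e, dfold_concat, dfold_cons]
        have step1 : demStep n 1 a = sTr n a := by
          rw [demStep_of_lt h 1 (by
            simp only [Perm.one_apply]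
            exact Fin.mk_lt_mk.2 (by omega)), one_mul]
        rw [step1, AStar]
        have hyy' : dfold n 1 ((redWord n w').reverse ++ redWord n w') = y' := by
          have := dfold_rev_self (n := n) (redWord n w')
          rw [hm] at this
          rw [this, hw']
        rw [hyy']
        -- compute `ddem (sTr n a) y'` : non-descent branch since `y'` fixes `a, a+1`
        have hfix1 : y' pa = pa := by rw [hy', mul_sTr_apply, sTr_left h, hsw.2]
        have hfix2 : y' pa1 = pa1 := by rw [hy', mul_sTr_apply, sTr_right h, hsw.1]
        rw [ddem_sTr h y', hinv']
        rw [if_neg (by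
          rw [hfix1, hfix2]
          exact not_lt.2 (le_of_lt (Fin.mk_lt_mk.2 (by omega))))]
        -- now `demStep (sTr n a * y') a = sTr n a * y' = y`
        have hval : (sTr n a * y') pa1 < (sTr n a * y') pa := by
          show sTr n a (y' pa1) < sTr n a (y' pa)
          rw [hfix1, hfix2, sTr_left h, sTr_right h]
          exact Fin.mk_lt_mk.2 (by omega)
        rw [demStep_gt' h (sTr n a * y') pa pa1 rfl rfl hval]
        rw [← hcomm, ← mul_assoc, sTr_mul_self, one_mul]
      · -- generic case: take `y' = sTr * y * sTr`
        set y' := sTr n a * y * sTr n a with hy'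
        have hinv' : y'⁻¹ = y' := by
          rw [hy', mul_inv_rev, mul_inv_rev, sTr_inv, hy, mul_assoc]
        have hno : ¬((y pa : ℕ) = a + 1 ∧ (y pa1 : ℕ) = a) := by
          rintro ⟨c1, c2⟩
          exact hsw ⟨Fin.ext c1, Fin.ext c2⟩
        have hsvlt : (sTr n a (y pa1) : ℕ) < (sTr n a (y pa) : ℕ) := by
          have hqp : (y pa1 : ℕ) < (y pa : ℕ) := hd
          rw [sTr_val h, sTr_val h]
          have := (y pa).isLt
          have := (y pa1).isLt
          split_ifs <;> omega
        have hdec1 : invNum n (y * sTr n a) + 1 = invNum n y :=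
          (right_descent_iff h y).2 hd
        have hdec2 : invNum n (sTr n a * (y * sTr n a)) + 1 = invNum n (y * sTr n a) := by
          rw [left_descent_iff h, mul_inv_rev, sTr_inv, hy]
          show sTr n a (y pa1) < sTr n a (y pa)
          exact Fin.lt_def.2 hsvlt
        have hy'e : y' = sTr n a * (y * sTr n a) := by rw [hy', mul_assoc]
        have hdec : invNum n y' + 2 = invNum n y := by rw [hy'e]; omega
        obtain ⟨w', hw'⟩ := ihN y' (by omega) hinv'
        refine ⟨demStep n w' a, ?_⟩
        have hm : dfold n 1 (redWord n w') = w' := dfold_one_red (redWord_isReduced w')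
        have hmm : dfold n 1 (redWord n w' ++ [a]) = demStep n w' a := by
          rw [dfold_concat, hm]
        have h1 := dfold_rev_self (n := n) (redWord n w' ++ [a])
        rw [hmm] at h1
        rw [← h1]
        have e : (redWord n w' ++ [a]).reverse ++ (redWord n w' ++ [a])
            = (a :: ((redWord n w').reverse ++ redWord n w')) ++ [a] := by simp
        rw [e, dfold_concat, dfold_cons]
        have step1 : demStep n 1 a = sTr n a := by
          rw [demStep_of_lt h 1 (by
            simp only [Perm.one_apply]
            exact Fin.mk_lt_mk.2 (by omega)), one_mul]
        rw [step1, AStar]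
        have hyy' : dfold n 1 ((redWord n w').reverse ++ redWord n w') = y' := by
          have := dfold_rev_self (n := n) (redWord n w')
          rw [hm] at this
          rw [this, hw']
        rw [hyy']
        -- values of `y'` at `pa, pa1`
        have hval1 : y' pa = sTr n a (y pa1) := by
          rw [hy']
          show sTr n a (y (sTr n a pa)) = _
          rw [sTr_left h]
        have hval2 : y' pa1 = sTr n a (y pa) := by
          rw [hy']
          show sTr n a (y (sTr n a pa1)) = _
          rw [sTr_right h]
        -- non-descent branch of `ddem (sTr n a) y'`
        rw [ddem_sTr h y', hinv']
        rw [if_neg (by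
          rw [hval1, hval2]
          intro hcon
          exact absurd (Fin.lt_def.1 hcon) (not_lt.2 (le_of_lt hsvlt)))]
        -- `demStep (sTr n a * y') a` : multiply, giving `sTr * y' * sTr = y`
        have hvv : ((sTr n a * y') pa : ℕ) < ((sTr n a * y') pa1 : ℕ) := by
          show ((sTr n a (y' pa)) : ℕ) < ((sTr n a (y' pa1)) : ℕ)
          rw [hval1, hval2, sTr_sTr, sTr_sTr]
          exact hd
        rw [demStep_lt' h (sTr n a * y') pa pa1 rfl rfl (Fin.lt_def.2 hvv)]
        rw [hy']
        rw [← mul_assoc, ← mul_assoc, sTr_mul_self, one_mul, mul_assoc, sTr_mul_self, mul_one]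


end DemAux

/-- The set `{w⁻¹ ∘ w : w ∈ S_n}` (Demazure product) is exactly the set of
involutions in `S_n`. -/
theorem demazure_square_eq_involutions (n : ℕ) (y : Equiv.Perm (Fin n)) :
    (∃ w : Equiv.Perm (Fin n), dem n w⁻¹ w = y) ↔ y⁻¹ = y := by
  constructor
  · rintro ⟨w, rfl⟩
    rw [dem_eq_ddem]
    exact ddem_self_involution w
  · intro hy
    obtain ⟨w, hw⟩ := exists_atom (invNum n y) y le_rfl hy
    exact ⟨w, by rw [dem_eq_ddem]; exact hw⟩
end

section
/- For an involution y ∈ I_n, the set of involution words of y is the disjoint union, over all atoms w of y, of the sets of reduced words of w: ℛ̂(y) = ⨆_{w ∈ A(y)} ℛ(w). -/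
open Equiv

namespace HMP
variable {n : ℕ}

lemma sTr_of_lt {a : ℕ} (h : a + 1 < n) :
    sTr n a = Equiv.swap ⟨a, Nat.lt_of_succ_lt h⟩ ⟨a + 1, h⟩ := by
  simp [sTr, h]

lemma sTr_of_ge {a : ℕ} (h : ¬ a + 1 < n) : sTr n a = 1 := by simp [sTr, h]

lemma sTr_mul_self (a : ℕ) : sTr n a * sTr n a = 1 := by
  by_cases h : a + 1 < n
  · rw [sTr_of_lt h]; exact Equiv.swap_mul_self _ _
  · rw [sTr_of_ge h]; simp

lemma sTr_inv (a : ℕ) : (sTr n a)⁻¹ = sTr n a := by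
  rw [inv_eq_iff_mul_eq_one]; exact sTr_mul_self a

@[simp] lemma wordProd_nil : wordProd n [] = 1 := rfl

lemma wordProd_cons (a : ℕ) (l : List ℕ) :
    wordProd n (a :: l) = sTr n a * wordProd n l := by
  simp [wordProd]

lemma wordProd_append (l₁ l₂ : List ℕ) :
    wordProd n (l₁ ++ l₂) = wordProd n l₁ * wordProd n l₂ := by
  simp [wordProd]

lemma wordProd_concat (l : List ℕ) (a : ℕ) :
    wordProd n (l ++ [a]) = wordProd n l * sTr n a := by
  rw [wordProd_append]; simp [wordProd]

lemma wordProd_reverse (l : List ℕ) :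
    wordProd n l.reverse = (wordProd n l)⁻¹ := by
  induction l with
  | nil => simp
  | cons a l ih =>
    rw [List.reverse_cons, wordProd_concat, ih, wordProd_cons, mul_inv_rev, sTr_inv]

lemma sTr_apply_left {a : ℕ} (h : a + 1 < n) :
    sTr n a ⟨a, Nat.lt_of_succ_lt h⟩ = ⟨a + 1, h⟩ := by
  rw [sTr_of_lt h]; exact Equiv.swap_apply_left _ _

lemma sTr_apply_right {a : ℕ} (h : a + 1 < n) :
    sTr n a ⟨a + 1, h⟩ = ⟨a, Nat.lt_of_succ_lt h⟩ := by
  rw [sTr_of_lt h]; exact Equiv.swap_apply_right _ _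

lemma sTr_apply_other {a : ℕ} (h : a + 1 < n) (c : Fin n)
    (h1 : (c : ℕ) ≠ a) (h2 : (c : ℕ) ≠ a + 1) : sTr n a c = c := by
  rw [sTr_of_lt h]
  exact Equiv.swap_apply_of_ne_of_ne (by simp [Fin.ext_iff, h1]) (by simp [Fin.ext_iff, h2])

@[simp] lemma invNum_one : invNum n 1 = 0 := by
  simp only [invNum, Finset.card_eq_zero]
  ext p
  simp only [Finset.mem_filter, Finset.mem_univ, true_and, Finset.notMem_empty, iff_false]
  rintro ⟨h1, h2⟩
  simp only [Perm.one_apply] at h2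
  exact absurd h1 (not_lt.2 h2.le)

lemma invNum_eq_zero {w : Perm (Fin n)} (h : invNum n w = 0) : w = 1 := by
  have hmono : StrictMono w := by
    intro i j hij
    rcases lt_trichotomy (w i) (w j) with h' | h' | h'
    · exact h'
    · exact absurd (w.injective h') hij.ne
    · exfalso
      have : (i, j) ∈ Finset.univ.filter
          (fun p : Fin n × Fin n => p.1 < p.2 ∧ w p.2 < w p.1) := by
        simp [hij, h']
      rw [invNum, Finset.card_eq_zero] at h
      simp [h] at this
  have hid : (w : Fin n → Fin n) = id := by
    haveI : WellFoundedLT (Fin n) := Finite.to_wellFoundedLT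
    refine (hmono.range_inj strictMono_id).1 ?_
    rw [Set.range_id]
    exact Set.range_eq_univ.2 w.surjective
  ext i
  simp [hid]


lemma sTr_apply_apply {a : ℕ} (c : Fin n) : sTr n a (sTr n a c) = c := by
  have := sTr_mul_self (n := n) a
  calc sTr n a (sTr n a c) = (sTr n a * sTr n a) c := rfl
  _ = c := by rw [this]; rfl

lemma sTr_strict {a : ℕ} (h : a + 1 < n) {i j : Fin n} (hij : i < j)
    (hne : ¬((i : ℕ) = a ∧ (j : ℕ) = a + 1)) : sTr n a i < sTr n a j := by
  have hlt := Fin.lt_iff_val_lt_val.1 hij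
  by_cases hi1 : (i : ℕ) = a
  · have hj : a + 1 < (j : ℕ) := by
      rcases Nat.lt_or_ge (j : ℕ) (a + 1 + 1) with h' | h'
      · exfalso; exact hne ⟨hi1, by omega⟩
      · omega
    have : i = ⟨a, Nat.lt_of_succ_lt h⟩ := Fin.ext hi1
    rw [this, sTr_apply_left h, sTr_apply_other h j (by omega) (by omega)]
    exact Fin.lt_iff_val_lt_val.2 (by simpa using hj)
  by_cases hi2 : (i : ℕ) = a + 1
  · have hj : a + 1 < (j : ℕ) := by omega
    have : i = ⟨a + 1, h⟩ := Fin.ext hi2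
    rw [this, sTr_apply_right h, sTr_apply_other h j (by omega) (by omega)]
    exact Fin.lt_iff_val_lt_val.2 (by simp; omega)
  rw [sTr_apply_other h i hi1 hi2]
  by_cases hj1 : (j : ℕ) = a
  · have : j = ⟨a, Nat.lt_of_succ_lt h⟩ := Fin.ext hj1
    rw [this, sTr_apply_left h]
    exact Fin.lt_iff_val_lt_val.2 (by simp; omega)
  by_cases hj2 : (j : ℕ) = a + 1
  · have : j = ⟨a + 1, h⟩ := Fin.ext hj2
    rw [this, sTr_apply_right h]
    exact Fin.lt_iff_val_lt_val.2 (by simp; omega)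
  rw [sTr_apply_other h j hj1 hj2]; exact hij

lemma invNum_mul_sTr_asc {a : ℕ} (h : a + 1 < n) {w : Perm (Fin n)}
    (hw : w ⟨a, Nat.lt_of_succ_lt h⟩ < w ⟨a + 1, h⟩) :
    invNum n (w * sTr n a) = invNum n w + 1 := by
  classical
  set p : Fin n := ⟨a, Nat.lt_of_succ_lt h⟩ with hp
  set q : Fin n := ⟨a + 1, h⟩ with hq
  have hpq : p < q := Fin.lt_iff_val_lt_val.2 (by simp [hp, hq])
  set s := sTr n a with hs
  have hsp : s p = q := sTr_apply_left h
  have hsq : s q = p := sTr_apply_right h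
  set A := Finset.univ.filter
    (fun x : Fin n × Fin n => x.1 < x.2 ∧ (w * s) x.2 < (w * s) x.1) with hA
  set B := Finset.univ.filter
    (fun x : Fin n × Fin n => x.1 < x.2 ∧ w x.2 < w x.1) with hB
  have hmemA : (p, q) ∈ A := by
    simp only [hA, Finset.mem_filter, Finset.mem_univ, true_and]
    refine ⟨hpq, ?_⟩
    show w (s q) < w (s p)
    rw [hsp, hsq]; exact hw
  have key : (A.erase (p, q)).card = B.card := by
    apply Finset.card_bij' (fun x _ => (s x.1, s x.2)) (fun x _ => (s x.1, s x.2))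
    · intro x hx
      rw [Finset.mem_erase] at hx
      obtain ⟨hxne, hxA⟩ := hx
      simp only [hA, Finset.mem_filter, Finset.mem_univ, true_and] at hxA
      obtain ⟨h1, h2⟩ := hxA
      have hne : ¬((x.1 : ℕ) = a ∧ (x.2 : ℕ) = a + 1) := by
        rintro ⟨e1, e2⟩
        exact hxne (Prod.ext (Fin.ext e1) (Fin.ext e2))
      simp only [hB, Finset.mem_filter, Finset.mem_univ, true_and]
      exact ⟨sTr_strict h h1 hne, h2⟩
    · intro x hx
      simp only [hB, Finset.mem_filter, Finset.mem_univ, true_and] at hx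
      obtain ⟨h1, h2⟩ := hx
      have hne : ¬((x.1 : ℕ) = a ∧ (x.2 : ℕ) = a + 1) := by
        rintro ⟨e1, e2⟩
        have : x.1 = p := Fin.ext e1
        have h2' : x.2 = q := Fin.ext e2
        rw [this, h2'] at h2
        exact absurd hw (not_lt.2 h2.le)
      rw [Finset.mem_erase]
      constructor
      · intro hcon
        have e1 : s x.1 = p := congrArg Prod.fst hcon
        have e2 : s x.2 = q := congrArg Prod.snd hcon
        have : x.1 = s p := by rw [← e1, sTr_apply_apply]
        have h2' : x.2 = s q := by rw [← e2, sTr_apply_apply]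
        rw [this, h2', hsp, hsq] at h1
        exact absurd hpq (not_lt.2 h1.le)
      · simp only [hA, Finset.mem_filter, Finset.mem_univ, true_and]
        refine ⟨sTr_strict h h1 hne, ?_⟩
        show w (s (s x.2)) < w (s (s x.1))
        rw [sTr_apply_apply, sTr_apply_apply]; exact h2
    · intro x _; exact Prod.ext (sTr_apply_apply _) (sTr_apply_apply _)
    · intro x _; exact Prod.ext (sTr_apply_apply _) (sTr_apply_apply _)
  have : A.card = (A.erase (p, q)).card + 1 := by
    rw [Finset.card_erase_of_mem hmemA]
    have : 0 < A.card := Finset.card_pos.2 ⟨_, hmemA⟩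
    omega
  calc invNum n (w * s) = A.card := rfl
  _ = B.card + 1 := by rw [this, key]
  _ = invNum n w + 1 := rfl

lemma invNum_mul_sTr_desc {a : ℕ} (h : a + 1 < n) {w : Perm (Fin n)}
    (hw : w ⟨a + 1, h⟩ < w ⟨a, Nat.lt_of_succ_lt h⟩) :
    invNum n (w * sTr n a) + 1 = invNum n w := by
  have h2 : (w * sTr n a) ⟨a, Nat.lt_of_succ_lt h⟩ < (w * sTr n a) ⟨a + 1, h⟩ := by
    show w (sTr n a _) < w (sTr n a _)
    rw [sTr_apply_left h, sTr_apply_right h]; exact hw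
  have := invNum_mul_sTr_asc h h2
  rw [mul_assoc, sTr_mul_self, mul_one] at this
  omega


lemma apply_ne {w : Perm (Fin n)} {i j : Fin n} (hij : i ≠ j) : w i ≠ w j :=
  fun e => hij (w.injective e)

/-- A permutation with no descent is the identity. -/
lemma eq_one_of_no_descent {w : Perm (Fin n)}
    (h : ∀ a : ℕ, (ha : a + 1 < n) → w ⟨a, Nat.lt_of_succ_lt ha⟩ < w ⟨a + 1, ha⟩) :
    w = 1 := by
  have hmono : StrictMono w := by
    have key : ∀ k : ℕ, ∀ i j : Fin n, (j : ℕ) = (i : ℕ) + k + 1 → w i < w j := by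
      intro k
      induction k with
      | zero =>
        intro i j hj
        have hja : (i : ℕ) + 1 < n := by have := j.2; omega
        have hi : i = ⟨(i : ℕ), Nat.lt_of_succ_lt hja⟩ := Fin.ext rfl
        have hjj : j = ⟨(i : ℕ) + 1, hja⟩ := Fin.ext (by simp; omega)
        rw [hi, hjj]; exact h _ hja
      | succ k ih =>
        intro i j hj
        have hm : ((i : ℕ) + k + 1) < n := by have := j.2; omega
        refine (ih i ⟨_, hm⟩ (by simp)).trans ?_
        have hja : ((i : ℕ) + k + 1) + 1 < n := by have := j.2; omega
        have hjj : j = ⟨((i : ℕ) + k + 1) + 1, hja⟩ := Fin.ext (by simp; omega)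
        rw [hjj]
        exact h _ hja
    intro i j hij
    exact key ((j : ℕ) - (i : ℕ) - 1) i j (by have := Fin.lt_iff_val_lt_val.1 hij; omega)
  have hid : (w : Fin n → Fin n) = id := by
    haveI : WellFoundedLT (Fin n) := Finite.to_wellFoundedLT
    refine (hmono.range_inj strictMono_id).1 ?_
    rw [Set.range_id]
    exact Set.range_eq_univ.2 w.surjective
  ext i
  simp [hid]

lemma exists_word_invNum (w : Perm (Fin n)) :
    ∃ l : List ℕ, IsWord n l ∧ wordProd n l = w ∧ l.length = invNum n w := by
  generalize hk : invNum n w = k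
  induction k generalizing w with
  | zero => exact ⟨[], by intro a ha; simp at ha, by simp [invNum_eq_zero hk, wordProd], rfl⟩
  | succ k ih =>
    by_cases hd : ∃ a : ℕ, ∃ ha : a + 1 < n, w ⟨a + 1, ha⟩ < w ⟨a, Nat.lt_of_succ_lt ha⟩
    · obtain ⟨a, ha, hlt⟩ := hd
      have hw' : invNum n (w * sTr n a) = k := by
        have := invNum_mul_sTr_desc ha hlt; omega
      obtain ⟨l, hl1, hl2, hl3⟩ := ih (w * sTr n a) hw'
      refine ⟨l ++ [a], ?_, ?_, by simp [hl3]⟩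
      · intro b hb
        rcases List.mem_append.1 hb with hb | hb
        · exact hl1 b hb
        · simp at hb; omega
      · rw [wordProd_concat, hl2, mul_assoc, sTr_mul_self, mul_one]
    · exfalso
      push_neg at hd
      have : w = 1 := by
        apply eq_one_of_no_descent
        intro a ha
        rcases lt_trichotomy (w ⟨a, Nat.lt_of_succ_lt ha⟩) (w ⟨a + 1, ha⟩) with h | h | h
        · exact h
        · exact absurd (w.injective h) (by simp [Fin.ext_iff])
        · exact absurd h (not_lt.2 (hd a ha))
      rw [this, invNum_one] at hk
      omega

lemma invNum_wordProd_le (l : List ℕ) : invNum n (wordProd n l) ≤ l.length := by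
  induction l using List.reverseRecOn with
  | nil => simp [wordProd, invNum_one]
  | append_singleton l a ih =>
    rw [wordProd_concat]
    by_cases ha : a + 1 < n
    · set w := wordProd n l
      rcases lt_trichotomy (w ⟨a, Nat.lt_of_succ_lt ha⟩) (w ⟨a + 1, ha⟩) with h | h | h
      · have := invNum_mul_sTr_asc ha h; simp [this]; omega
      · exact absurd (w.injective h) (by simp [Fin.ext_iff])
      · have := invNum_mul_sTr_desc ha h; simp; omega
    · rw [sTr_of_ge ha, mul_one]; simp; omega

lemma len_le {l : List ℕ} {w : Perm (Fin n)} (h1 : IsWord n l) (h2 : wordProd n l = w) :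
    len n w ≤ l.length :=
  Nat.sInf_le ⟨l, h1, h2, rfl⟩

lemma len_mem (w : Perm (Fin n)) :
    ∃ l : List ℕ, IsWord n l ∧ wordProd n l = w ∧ l.length = len n w := by
  have : len n w ∈ {k | ∃ l : List ℕ, IsWord n l ∧ wordProd n l = w ∧ l.length = k} := by
    apply Nat.sInf_mem
    obtain ⟨l, h1, h2, h3⟩ := exists_word_invNum w
    exact ⟨invNum n w, l, h1, h2, h3⟩
  exact this

lemma len_eq_invNum (w : Perm (Fin n)) : len n w = invNum n w := by
  apply le_antisymm
  · obtain ⟨l, h1, h2, h3⟩ := exists_word_invNum w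
    exact h3 ▸ len_le h1 h2
  · obtain ⟨l, h1, h2, h3⟩ := len_mem w
    rw [← h3, ← h2]
    exact invNum_wordProd_le l

lemma len_one : len n 1 = 0 := by rw [len_eq_invNum, invNum_one]

lemma len_eq_zero {w : Perm (Fin n)} (h : len n w = 0) : w = 1 :=
  invNum_eq_zero (by rw [← len_eq_invNum, h])

lemma len_mul_sTr_asc {a : ℕ} (h : a + 1 < n) {w : Perm (Fin n)}
    (hw : w ⟨a, Nat.lt_of_succ_lt h⟩ < w ⟨a + 1, h⟩) :
    len n (w * sTr n a) = len n w + 1 := by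
  rw [len_eq_invNum, len_eq_invNum]; exact invNum_mul_sTr_asc h hw

lemma len_mul_sTr_desc {a : ℕ} (h : a + 1 < n) {w : Perm (Fin n)}
    (hw : w ⟨a + 1, h⟩ < w ⟨a, Nat.lt_of_succ_lt h⟩) :
    len n (w * sTr n a) + 1 = len n w := by
  rw [len_eq_invNum, len_eq_invNum]; exact invNum_mul_sTr_desc h hw

lemma len_inv (w : Perm (Fin n)) : len n w⁻¹ = len n w := by
  have key : ∀ v : Perm (Fin n), len n v⁻¹ ≤ len n v := by
    intro v
    obtain ⟨l, h1, h2, h3⟩ := len_mem v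
    have : wordProd n l.reverse = v⁻¹ := by rw [wordProd_reverse, h2]
    have hle := len_le (fun a ha => h1 a (List.mem_reverse.1 ha)) this
    simpa [h3] using hle
  have h1 := key w
  have h2 := key w⁻¹
  rw [inv_inv] at h2
  omega

/-- dichotomy -/
lemma len_mul_sTr_cases {a : ℕ} (h : a + 1 < n) (w : Perm (Fin n)) :
    len n (w * sTr n a) = len n w + 1 ∨ len n (w * sTr n a) + 1 = len n w := by
  rcases lt_trichotomy (w ⟨a, Nat.lt_of_succ_lt h⟩) (w ⟨a + 1, h⟩) with h' | h' | h'
  · exact Or.inl (len_mul_sTr_asc h h')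
  · exact absurd (w.injective h') (by simp [Fin.ext_iff])
  · exact Or.inr (len_mul_sTr_desc h h')


lemma demStep_invalid {a : ℕ} (h : ¬ a + 1 < n) (u : Perm (Fin n)) :
    demStep n u a = u := by
  rw [demStep, sTr_of_ge h, mul_one, if_neg (by omega)]

lemma demStep_asc {a : ℕ} (h : a + 1 < n) {u : Perm (Fin n)}
    (hu : u ⟨a, Nat.lt_of_succ_lt h⟩ < u ⟨a + 1, h⟩) :
    demStep n u a = u * sTr n a := by
  rw [demStep, if_pos (len_mul_sTr_asc h hu)]

lemma demStep_desc {a : ℕ} (h : a + 1 < n) {u : Perm (Fin n)}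
    (hu : u ⟨a + 1, h⟩ < u ⟨a, Nat.lt_of_succ_lt h⟩) :
    demStep n u a = u := by
  rw [demStep, if_neg (by have := len_mul_sTr_desc h hu; omega)]

lemma neq_vals {u : Perm (Fin n)} {i j : Fin n} (hij : i ≠ j) : u i ≠ u j :=
  fun e => hij (u.injective e)

lemma demStep_idem (a : ℕ) (u : Perm (Fin n)) :
    demStep n (demStep n u a) a = demStep n u a := by
  by_cases h : a + 1 < n
  · set p : Fin n := ⟨a, Nat.lt_of_succ_lt h⟩
    set q : Fin n := ⟨a + 1, h⟩
    have hpq : p ≠ q := by simp [p, q, Fin.ext_iff]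
    rcases (neq_vals (u := u) hpq).lt_or_gt with hu | hu
    · rw [demStep_asc h hu]
      apply demStep_desc h
      show (u * sTr n a) q < (u * sTr n a) p
      show u (sTr n a q) < u (sTr n a p)
      rw [sTr_apply_left h, sTr_apply_right h]
      exact hu
    · rw [demStep_desc h hu, demStep_desc h hu]
  · rw [demStep_invalid h, demStep_invalid h]

lemma sTr_comm {a b : ℕ} (hab : a + 2 ≤ b) : sTr n a * sTr n b = sTr n b * sTr n a := by
  by_cases ha : a + 1 < n
  · by_cases hb : b + 1 < n
    · have : Equiv.Perm.Disjoint (sTr n a) (sTr n b) := by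
        intro x
        by_cases hx : (x : ℕ) = a ∨ (x : ℕ) = a + 1
        · right
          exact sTr_apply_other hb x (by omega) (by omega)
        · left
          push_neg at hx
          exact sTr_apply_other ha x hx.1 hx.2
      exact this.commute.eq
    · rw [sTr_of_ge hb, mul_one, one_mul]
  · rw [sTr_of_ge ha, mul_one, one_mul]

lemma demStep_comm {a b : ℕ} (hab : a + 2 ≤ b) (u : Perm (Fin n)) :
    demStep n (demStep n u a) b = demStep n (demStep n u b) a := by
  by_cases ha : a + 1 < n
  · by_cases hb : b + 1 < n
    · set pa : Fin n := ⟨a, Nat.lt_of_succ_lt ha⟩ with hpa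
      set qa : Fin n := ⟨a + 1, ha⟩ with hqa
      set pb : Fin n := ⟨b, Nat.lt_of_succ_lt hb⟩ with hpb
      set qb : Fin n := ⟨b + 1, hb⟩ with hqb
      have key1 : ∀ v : Perm (Fin n), (v * sTr n a) pb = v pb ∧ (v * sTr n a) qb = v qb := by
        intro v
        constructor <;>
        · show v (sTr n a _) = v _
          rw [sTr_apply_other ha _ (by simp [hpb, hqb]; omega) (by simp [hpb, hqb]; omega)]
      have key2 : ∀ v : Perm (Fin n), (v * sTr n b) pa = v pa ∧ (v * sTr n b) qa = v qa := by
        intro v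
        constructor <;>
        · show v (sTr n b _) = v _
          rw [sTr_apply_other hb _ (by simp [hpa, hqa]; omega) (by simp [hpa, hqa]; omega)]
      have hane : pa ≠ qa := by simp [hpa, hqa, Fin.ext_iff]
      have hbne : pb ≠ qb := by simp [hpb, hqb, Fin.ext_iff]
      rcases (neq_vals (u := u) hane).lt_or_gt with hua | hua <;>
        rcases (neq_vals (u := u) hbne).lt_or_gt with hub | hub
      · have L : demStep n (demStep n u a) b = u * sTr n a * sTr n b := by
          rw [demStep_asc ha hua, demStep_asc hb (by rw [(key1 u).1, (key1 u).2]; exact hub)]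
        have R : demStep n (demStep n u b) a = u * sTr n b * sTr n a := by
          rw [demStep_asc hb hub, demStep_asc ha (by rw [(key2 u).1, (key2 u).2]; exact hua)]
        rw [L, R, mul_assoc, mul_assoc, sTr_comm hab]
      · have L : demStep n (demStep n u a) b = u * sTr n a := by
          rw [demStep_asc ha hua, demStep_desc hb (by rw [(key1 u).1, (key1 u).2]; exact hub)]
        have R : demStep n (demStep n u b) a = u * sTr n a := by
          rw [demStep_desc hb hub, demStep_asc ha hua]
        rw [L, R]
      · have L : demStep n (demStep n u a) b = u * sTr n b := by
          rw [demStep_desc ha hua, demStep_asc hb hub]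
        have R : demStep n (demStep n u b) a = u * sTr n b := by
          rw [demStep_asc hb hub, demStep_desc ha (by rw [(key2 u).1, (key2 u).2]; exact hua)]
        rw [L, R]
      · rw [demStep_desc ha hua, demStep_desc hb hub, demStep_desc ha hua]
    · rw [demStep_invalid hb, demStep_invalid hb]
  · rw [demStep_invalid ha, demStep_invalid ha]

lemma sTr_braid {a : ℕ} (h : a + 2 < n) :
    sTr n a * sTr n (a + 1) * sTr n a = sTr n (a + 1) * sTr n a * sTr n (a + 1) := by
  have ha : a + 1 < n := Nat.lt_of_succ_lt h
  have hb : (a + 1) + 1 < n := h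
  set p0 : Fin n := ⟨a, Nat.lt_of_succ_lt ha⟩ with hp0
  set p1 : Fin n := ⟨a + 1, ha⟩ with hp1
  set p2 : Fin n := ⟨a + 2, h⟩ with hp2
  have e1 : sTr n a * sTr n (a + 1) * sTr n a = swap (sTr n a p1) (sTr n a p2) := by
    rw [Equiv.swap_apply_apply]
    have : (sTr n a)⁻¹ = sTr n a := by rw [inv_eq_iff_mul_eq_one]; exact sTr_mul_self a
    rw [this, sTr_of_lt hb]
  have e2 : sTr n (a + 1) * sTr n a * sTr n (a + 1) =
      swap (sTr n (a + 1) p0) (sTr n (a + 1) p1) := by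
    rw [Equiv.swap_apply_apply]
    have : (sTr n (a + 1))⁻¹ = sTr n (a + 1) := by
      rw [inv_eq_iff_mul_eq_one]; exact sTr_mul_self (a + 1)
    rw [this, sTr_of_lt ha]
  rw [e1, e2, sTr_apply_right ha, sTr_apply_other ha p2 (by simp [hp2]) (by simp [hp2]),
    sTr_apply_other hb p0 (by simp [hp0]) (by simp [hp0]; omega), sTr_apply_left hb]

lemma demStep_braid {a : ℕ} (h : a + 2 < n) (u : Perm (Fin n)) :
    demStep n (demStep n (demStep n u a) (a + 1)) a =
      demStep n (demStep n (demStep n u (a + 1)) a) (a + 1) := by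
  have ha : a + 1 < n := Nat.lt_of_succ_lt h
  have hb : (a + 1) + 1 < n := h
  set p0 : Fin n := ⟨a, Nat.lt_of_succ_lt ha⟩ with hp0
  set p1 : Fin n := ⟨a + 1, ha⟩ with hp1
  set p2 : Fin n := ⟨a + 2, h⟩ with hp2
  have h01 : p0 ≠ p1 := by simp [hp0, hp1, Fin.ext_iff]
  have h12 : p1 ≠ p2 := by simp [hp1, hp2, Fin.ext_iff]
  have h02 : p0 ≠ p2 := by simp [hp0, hp2, Fin.ext_iff]
  have s0 : sTr n a p0 = p1 := sTr_apply_left ha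
  have s1 : sTr n a p1 = p0 := sTr_apply_right ha
  have s2 : sTr n a p2 = p2 := sTr_apply_other ha p2 (by simp [hp2]) (by simp [hp2])
  have t0 : sTr n (a + 1) p0 = p0 :=
    sTr_apply_other hb p0 (by simp [hp0]) (by simp [hp0]; omega)
  have t1 : sTr n (a + 1) p1 = p2 := sTr_apply_left hb
  have t2 : sTr n (a + 1) p2 = p1 := sTr_apply_right hb
  have Dasc : ∀ v : Perm (Fin n), v p0 < v p1 → demStep n v a = v * sTr n a :=
    fun v hv => demStep_asc ha hv
  have Ddesc : ∀ v : Perm (Fin n), v p1 < v p0 → demStep n v a = v :=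
    fun v hv => demStep_desc ha hv
  have Easc : ∀ v : Perm (Fin n), v p1 < v p2 → demStep n v (a + 1) = v * sTr n (a + 1) :=
    fun v hv => demStep_asc hb hv
  have Edesc : ∀ v : Perm (Fin n), v p2 < v p1 → demStep n v (a + 1) = v :=
    fun v hv => demStep_desc hb hv
  have mulap : ∀ (v : Perm (Fin n)) (s : Perm (Fin n)) (c : Fin n), (v * s) c = v (s c) :=
    fun _ _ _ => rfl
  rcases (neq_vals (u := u) h01).lt_or_gt with hxy | hxy <;>
    rcases (neq_vals (u := u) h12).lt_or_gt with hyz | hyz <;>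
    rcases (neq_vals (u := u) h02).lt_or_gt with hxz | hxz
  · -- x<y<z
    have L : demStep n (demStep n (demStep n u a) (a + 1)) a =
        u * sTr n a * sTr n (a + 1) * sTr n a := by
      rw [Dasc u hxy, Easc (u * sTr n a) (by rw [mulap, mulap, s1, s2]; exact hxz),
        Dasc (u * sTr n a * sTr n (a + 1)) (by rw [mulap, mulap, mulap, mulap, t0, t1, s0, s2]; exact hyz)]
    have R : demStep n (demStep n (demStep n u (a + 1)) a) (a + 1) =
        u * sTr n (a + 1) * sTr n a * sTr n (a + 1) := by
      rw [Easc u hyz, Dasc (u * sTr n (a + 1)) (by rw [mulap, mulap, t0, t1]; exact hxz),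
        Easc (u * sTr n (a + 1) * sTr n a) (by rw [mulap, mulap, mulap, mulap, s1, s2, t0, t2]; exact hxy)]
    rw [L, R]
    simp only [mul_assoc]
    congr 1
    simp only [← mul_assoc]
    exact sTr_braid h
  · exact absurd (hxy.trans hyz) (not_lt.2 hxz.le)
  · -- x<z<y
    have L : demStep n (demStep n (demStep n u a) (a + 1)) a = u * sTr n a * sTr n (a + 1) := by
      rw [Dasc u hxy, Easc (u * sTr n a) (by rw [mulap, mulap, s1, s2]; exact hxz),
        Ddesc (u * sTr n a * sTr n (a + 1)) (by rw [mulap, mulap, mulap, mulap, t0, t1, s0, s2]; exact hyz)]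
    have R : demStep n (demStep n (demStep n u (a + 1)) a) (a + 1) =
        u * sTr n a * sTr n (a + 1) := by
      rw [Edesc u hyz, Dasc u hxy, Easc (u * sTr n a) (by rw [mulap, mulap, s1, s2]; exact hxz)]
    rw [L, R]
  · -- z<x<y
    have L : demStep n (demStep n (demStep n u a) (a + 1)) a = u * sTr n a := by
      rw [Dasc u hxy, Edesc (u * sTr n a) (by rw [mulap, mulap, s1, s2]; exact hxz),
        Ddesc (u * sTr n a) (by rw [mulap, mulap, s0, s1]; exact hxy)]
    have R : demStep n (demStep n (demStep n u (a + 1)) a) (a + 1) = u * sTr n a := by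
      rw [Edesc u hyz, Dasc u hxy, Edesc (u * sTr n a) (by rw [mulap, mulap, s1, s2]; exact hxz)]
    rw [L, R]
  · -- y<x<z
    have L : demStep n (demStep n (demStep n u a) (a + 1)) a =
        u * sTr n (a + 1) * sTr n a := by
      rw [Ddesc u hxy, Easc u hyz, Dasc (u * sTr n (a + 1)) (by rw [mulap, mulap, t0, t1]; exact hxz)]
    have R : demStep n (demStep n (demStep n u (a + 1)) a) (a + 1) =
        u * sTr n (a + 1) * sTr n a := by
      rw [Easc u hyz, Dasc (u * sTr n (a + 1)) (by rw [mulap, mulap, t0, t1]; exact hxz),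
        Edesc (u * sTr n (a + 1) * sTr n a) (by rw [mulap, mulap, mulap, mulap, s1, s2, t0, t2]; exact hxy)]
    rw [L, R]
  · -- y<z<x
    have L : demStep n (demStep n (demStep n u a) (a + 1)) a = u * sTr n (a + 1) := by
      rw [Ddesc u hxy, Easc u hyz, Ddesc (u * sTr n (a + 1)) (by rw [mulap, mulap, t0, t1]; exact hxz)]
    have R : demStep n (demStep n (demStep n u (a + 1)) a) (a + 1) = u * sTr n (a + 1) := by
      rw [Easc u hyz, Ddesc (u * sTr n (a + 1)) (by rw [mulap, mulap, t0, t1]; exact hxz),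
        Edesc (u * sTr n (a + 1)) (by rw [mulap, mulap, t1, t2]; exact hyz)]
    rw [L, R]
  · exact absurd (hxz.trans hyz) (not_lt.2 hxy.le)
  · rw [Ddesc u hxy, Edesc u hyz, Ddesc u hxy, Edesc u hyz]


lemma neq_vals' {u : Perm (Fin n)} {i j : Fin n} (hij : i ≠ j) : u i ≠ u j :=
  fun e => hij (u.injective e)

lemma demStep_inc {a : ℕ} {u : Perm (Fin n)}
    (h : len n (u * sTr n a) = len n u + 1) : demStep n u a = u * sTr n a := if_pos h

lemma demStep_stall {a : ℕ} {u : Perm (Fin n)}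
    (h : len n (u * sTr n a) ≠ len n u + 1) : demStep n u a = u := if_neg h

lemma desc_values {a : ℕ} (ha : a + 1 < n) {w : Perm (Fin n)}
    (hd : len n (w * sTr n a) + 1 = len n w) :
    w ⟨a + 1, ha⟩ < w ⟨a, Nat.lt_of_succ_lt ha⟩ := by
  rcases (neq_vals' (u := w) (show (⟨a, Nat.lt_of_succ_lt ha⟩ : Fin n) ≠ ⟨a + 1, ha⟩ by
    simp [Fin.ext_iff])).lt_or_gt with h | h
  · have := len_mul_sTr_asc ha h; omega
  · exact h

lemma exists_isReducedWord (w : Perm (Fin n)) : ∃ l, IsReducedWord n l w := by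
  obtain ⟨l, h1, h2, h3⟩ := len_mem w
  exact ⟨l, h1, h2, fun l' hw' hp' => by rw [h3]; exact len_le hw' hp'⟩

lemma isReducedWord_redWord (w : Perm (Fin n)) : IsReducedWord n (redWord n w) w := by
  rw [redWord, dif_pos (exists_isReducedWord w)]
  exact (exists_isReducedWord w).choose_spec

lemma length_eq_of_red {l : List ℕ} {w : Perm (Fin n)} (h : IsReducedWord n l w) :
    l.length = len n w := by
  obtain ⟨l₀, h1, h2, h3⟩ := len_mem w
  have := h.2.2 l₀ h1 h2
  have := len_le h.1 h.2.1
  omega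

lemma isReducedWord_of_len {l : List ℕ} {w : Perm (Fin n)} (h1 : IsWord n l)
    (h2 : wordProd n l = w) (h3 : l.length = len n w) : IsReducedWord n l w :=
  ⟨h1, h2, fun l' hw' hp' => by rw [h3]; exact len_le hw' hp'⟩

lemma length_redWord (w : Perm (Fin n)) : (redWord n w).length = len n w :=
  length_eq_of_red (isReducedWord_redWord w)

lemma reduced_concat {l : List ℕ} {a : ℕ} {w : Perm (Fin n)}
    (h : IsReducedWord n (l ++ [a]) w) :
    IsReducedWord n l (w * sTr n a) ∧ len n (w * sTr n a) + 1 = len n w ∧ a + 1 < n := by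
  have ha : a + 1 < n := h.1 a (by simp)
  have hw : IsWord n l := fun b hb => h.1 b (by simp [hb])
  have hp : wordProd n l = w * sTr n a := by
    have := h.2.1
    rw [wordProd_concat] at this
    rw [← this, mul_assoc, sTr_mul_self, mul_one]
  have hlen := length_eq_of_red h
  simp only [List.length_append, List.length_singleton] at hlen
  have hle : len n (w * sTr n a) ≤ l.length := len_le hw hp
  rcases len_mul_sTr_cases ha w with hc | hc
  · omega
  · exact ⟨isReducedWord_of_len hw hp (by omega), hc, ha⟩

lemma descent_reduced_concat {a : ℕ} (ha : a + 1 < n) {w : Perm (Fin n)}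
    (hd : len n (w * sTr n a) + 1 = len n w) :
    IsReducedWord n (redWord n (w * sTr n a) ++ [a]) w := by
  have hr := isReducedWord_redWord (n := n) (w * sTr n a)
  apply isReducedWord_of_len
  · intro b hb
    rcases List.mem_append.1 hb with hb | hb
    · exact hr.1 b hb
    · simp at hb; omega
  · rw [wordProd_concat, hr.2.1, mul_assoc, sTr_mul_self, mul_one]
  · rw [List.length_append, List.length_singleton, length_redWord]; omega

theorem fold_wellDef :
    ∀ (k : ℕ) (w : Perm (Fin n)), len n w = k →
      ∀ l l', IsReducedWord n l w → IsReducedWord n l' w →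
      ∀ u : Perm (Fin n), l.foldl (demStep n) u = l'.foldl (demStep n) u := by
  intro k
  induction k using Nat.strong_induction_on with
  | _ k ih =>
    intro w hw l l' hl hl' u
    match k, hw with
    | 0, hw =>
      have h1 : l.length = 0 := by rw [length_eq_of_red hl, hw]
      have h2 : l'.length = 0 := by rw [length_eq_of_red hl', hw]
      rw [List.length_eq_zero_iff.1 h1, List.length_eq_zero_iff.1 h2]
    | (k + 1), hw =>
      rcases l.eq_nil_or_concat with rfl | ⟨m, a, rfl⟩
      · exact absurd ((length_eq_of_red hl).trans hw) (by simp)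
      rcases l'.eq_nil_or_concat with rfl | ⟨m', b, rfl⟩
      · exact absurd ((length_eq_of_red hl').trans hw) (by simp)
      rw [List.concat_eq_append] at hl
      rw [List.concat_eq_append] at hl'
      rw [List.concat_eq_append, List.concat_eq_append]
      obtain ⟨hma, hda, haa⟩ := reduced_concat hl
      obtain ⟨hmb, hdb, hbb⟩ := reduced_concat hl'
      rw [List.foldl_append, List.foldl_append]
      simp only [List.foldl_cons, List.foldl_nil]
      -- helper for the braid case
      have braidcase : ∀ (a : ℕ) (m m' : List ℕ), a + 2 < n →
          IsReducedWord n (m ++ [a]) w → IsReducedWord n (m' ++ [a + 1]) w →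
          demStep n (m.foldl (demStep n) u) a =
            demStep n (m'.foldl (demStep n) u) (a + 1) := by
        intro a m m' ha2 hma' hmb'
        have ha : a + 1 < n := Nat.lt_of_succ_lt ha2
        have hb : (a + 1) + 1 < n := ha2
        obtain ⟨hm1, hd1, _⟩ := reduced_concat hma'
        obtain ⟨hm2, hd2, _⟩ := reduced_concat hmb'
        set p0 : Fin n := ⟨a, Nat.lt_of_succ_lt ha⟩ with hp0
        set p1 : Fin n := ⟨a + 1, ha⟩ with hp1
        set p2 : Fin n := ⟨a + 2, ha2⟩ with hp2
        have s0 : sTr n a p0 = p1 := sTr_apply_left ha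
        have s1 : sTr n a p1 = p0 := sTr_apply_right ha
        have s2 : sTr n a p2 = p2 := sTr_apply_other ha p2 (by simp [hp2]) (by simp [hp2])
        have t0 : sTr n (a + 1) p0 = p0 :=
          sTr_apply_other hb p0 (by simp [hp0]) (by simp [hp0]; omega)
        have t1 : sTr n (a + 1) p1 = p2 := sTr_apply_left hb
        have t2 : sTr n (a + 1) p2 = p1 := sTr_apply_right hb
        have mulap : ∀ (v s : Perm (Fin n)) (c : Fin n), (v * s) c = v (s c) := fun _ _ _ => rfl
        have hv1 : w p1 < w p0 := desc_values ha hd1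
        have hv2 : w p2 < w p1 := desc_values hb hd2
        -- length chain on the a side
        have e1 : len n (w * sTr n a * sTr n (a + 1)) + 1 = len n (w * sTr n a) := by
          apply len_mul_sTr_desc hb
          have : (w * sTr n a) p2 < (w * sTr n a) p1 := by
            rw [mulap, mulap, s1, s2]; exact hv2.trans hv1
          exact this
        have e2 : len n (w * sTr n a * sTr n (a + 1) * sTr n a) + 1 =
            len n (w * sTr n a * sTr n (a + 1)) := by
          apply len_mul_sTr_desc ha
          have : (w * sTr n a * sTr n (a + 1)) p1 < (w * sTr n a * sTr n (a + 1)) p0 := by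
            rw [mulap, mulap, mulap, mulap, t1, t0, s2, s0]; exact hv2
          exact this
        -- length chain on the b side
        have f1 : len n (w * sTr n (a + 1) * sTr n a) + 1 = len n (w * sTr n (a + 1)) := by
          apply len_mul_sTr_desc ha
          have : (w * sTr n (a + 1)) p1 < (w * sTr n (a + 1)) p0 := by
            rw [mulap, mulap, t1, t0]; exact hv2.trans hv1
          exact this
        have f2 : len n (w * sTr n (a + 1) * sTr n a * sTr n (a + 1)) + 1 =
            len n (w * sTr n (a + 1) * sTr n a) := by
          apply len_mul_sTr_desc hb
          have : (w * sTr n (a + 1) * sTr n a) p2 < (w * sTr n (a + 1) * sTr n a) p1 := by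
            rw [mulap, mulap, mulap, mulap, s2, s1, t2, t0]; exact hv1
          exact this
        set x3 := w * sTr n a * sTr n (a + 1) * sTr n a with hx3
        have hbraid : w * sTr n (a + 1) * sTr n a * sTr n (a + 1) = x3 := by
          rw [hx3]
          simp only [mul_assoc]
          congr 1
          simp only [← mul_assoc]
          exact (sTr_braid ha2).symm
        have hlx3 : len n x3 = k - 2 ∧ 2 ≤ k := by
          constructor <;> omega
        -- reduced word for w * sTr a : redWord x3 ++ [a, a+1]
        have hrx := isReducedWord_redWord (n := n) x3
        have red_a : IsReducedWord n (redWord n x3 ++ [a, a + 1]) (w * sTr n a) := by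
          apply isReducedWord_of_len
          · intro c hc
            rcases List.mem_append.1 hc with hc | hc
            · exact hrx.1 c hc
            · simp at hc; rcases hc with rfl | rfl <;> omega
          · have : redWord n x3 ++ [a, a + 1] = (redWord n x3 ++ [a]) ++ [a + 1] := by simp
            rw [this, wordProd_concat, wordProd_concat, hrx.2.1, hx3]
            rw [mul_assoc (w * sTr n a * sTr n (a + 1)), sTr_mul_self, mul_one,
              mul_assoc, sTr_mul_self, mul_one]
          · simp [length_redWord]; omega
        have red_b : IsReducedWord n (redWord n x3 ++ [a + 1, a]) (w * sTr n (a + 1)) := by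
          apply isReducedWord_of_len
          · intro c hc
            rcases List.mem_append.1 hc with hc | hc
            · exact hrx.1 c hc
            · simp at hc; rcases hc with rfl | rfl <;> omega
          · have : redWord n x3 ++ [a + 1, a] = (redWord n x3 ++ [a + 1]) ++ [a] := by simp
            rw [this, wordProd_concat, wordProd_concat, hrx.2.1, ← hbraid]
            rw [mul_assoc (w * sTr n (a + 1) * sTr n a), sTr_mul_self, mul_one,
              mul_assoc, sTr_mul_self, mul_one]
          · simp [length_redWord]; omega
        have ihm : m.foldl (demStep n) u = (redWord n x3 ++ [a, a + 1]).foldl (demStep n) u :=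
          ih (len n (w * sTr n a)) (by omega) _ rfl _ _ hm1 red_a u
        have ihm' : m'.foldl (demStep n) u =
            (redWord n x3 ++ [a + 1, a]).foldl (demStep n) u :=
          ih (len n (w * sTr n (a + 1))) (by omega) _ rfl _ _ hm2 red_b u
        rw [ihm, ihm', List.foldl_append, List.foldl_append]
        simp only [List.foldl_cons, List.foldl_nil]
        exact demStep_braid ha2 _
      by_cases hab : a = b
      · subst hab
        have : m.foldl (demStep n) u = m'.foldl (demStep n) u :=
          ih (len n (w * sTr n a)) (by omega) _ rfl _ _ hma hmb u
        rw [this]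
      rcases Nat.lt_or_ge (a + 1) b with hd | hd'
      · -- a + 2 ≤ b : commuting case
        have hcomm : w * sTr n a * sTr n b = w * sTr n b * sTr n a := by
          rw [mul_assoc, mul_assoc, sTr_comm hd]
        have hva : w ⟨a + 1, haa⟩ < w ⟨a, Nat.lt_of_succ_lt haa⟩ := desc_values haa hda
        have hvb : w ⟨b + 1, hbb⟩ < w ⟨b, Nat.lt_of_succ_lt hbb⟩ := desc_values hbb hdb
        have mulap : ∀ (v s : Perm (Fin n)) (c : Fin n), (v * s) c = v (s c) := fun _ _ _ => rfl
        have e1 : len n (w * sTr n a * sTr n b) + 1 = len n (w * sTr n a) := by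
          apply len_mul_sTr_desc hbb
          rw [mulap, mulap,
            sTr_apply_other haa _ (by simp; omega) (by simp; omega),
            sTr_apply_other haa _ (by simp; omega) (by simp; omega)]
          exact hvb
        have f1 : len n (w * sTr n b * sTr n a) + 1 = len n (w * sTr n b) := by
          apply len_mul_sTr_desc haa
          rw [mulap, mulap,
            sTr_apply_other hbb _ (by simp; omega) (by simp; omega),
            sTr_apply_other hbb _ (by simp; omega) (by simp; omega)]
          exact hva
        set x2 := w * sTr n a * sTr n b with hx2
        have hrx := isReducedWord_redWord (n := n) x2
        have red_a : IsReducedWord n (redWord n x2 ++ [b]) (w * sTr n a) := by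
          apply isReducedWord_of_len
          · intro c hc
            rcases List.mem_append.1 hc with hc | hc
            · exact hrx.1 c hc
            · simp at hc; omega
          · rw [wordProd_concat, hrx.2.1, hx2, mul_assoc, sTr_mul_self, mul_one]
          · simp [length_redWord]; omega
        have red_b : IsReducedWord n (redWord n x2 ++ [a]) (w * sTr n b) := by
          apply isReducedWord_of_len
          · intro c hc
            rcases List.mem_append.1 hc with hc | hc
            · exact hrx.1 c hc
            · simp at hc; omega
          · rw [wordProd_concat, hrx.2.1, hcomm, mul_assoc, sTr_mul_self, mul_one]
          · simp [length_redWord]; omega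
        have ihm : m.foldl (demStep n) u = (redWord n x2 ++ [b]).foldl (demStep n) u :=
          ih (len n (w * sTr n a)) (by omega) _ rfl _ _ hma red_a u
        have ihm' : m'.foldl (demStep n) u = (redWord n x2 ++ [a]).foldl (demStep n) u :=
          ih (len n (w * sTr n b)) (by omega) _ rfl _ _ hmb red_b u
        rw [ihm, ihm', List.foldl_append, List.foldl_append]
        simp only [List.foldl_cons, List.foldl_nil]
        exact (demStep_comm hd _).symm
      rcases Nat.lt_or_ge (b + 1) a with he | he'
      · -- b + 2 ≤ a : commuting case, symmetric
        have hcomm : w * sTr n b * sTr n a = w * sTr n a * sTr n b := by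
          rw [mul_assoc, mul_assoc, sTr_comm he]
        have hva : w ⟨a + 1, haa⟩ < w ⟨a, Nat.lt_of_succ_lt haa⟩ := desc_values haa hda
        have hvb : w ⟨b + 1, hbb⟩ < w ⟨b, Nat.lt_of_succ_lt hbb⟩ := desc_values hbb hdb
        have mulap : ∀ (v s : Perm (Fin n)) (c : Fin n), (v * s) c = v (s c) := fun _ _ _ => rfl
        have e1 : len n (w * sTr n a * sTr n b) + 1 = len n (w * sTr n a) := by
          apply len_mul_sTr_desc hbb
          rw [mulap, mulap,
            sTr_apply_other haa _ (by simp; omega) (by simp; omega),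
            sTr_apply_other haa _ (by simp; omega) (by simp; omega)]
          exact hvb
        have f1 : len n (w * sTr n b * sTr n a) + 1 = len n (w * sTr n b) := by
          apply len_mul_sTr_desc haa
          rw [mulap, mulap,
            sTr_apply_other hbb _ (by simp; omega) (by simp; omega),
            sTr_apply_other hbb _ (by simp; omega) (by simp; omega)]
          exact hva
        set x2 := w * sTr n a * sTr n b with hx2
        have hrx := isReducedWord_redWord (n := n) x2
        have red_a : IsReducedWord n (redWord n x2 ++ [b]) (w * sTr n a) := by
          apply isReducedWord_of_len
          · intro c hc
            rcases List.mem_append.1 hc with hc | hc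
            · exact hrx.1 c hc
            · simp at hc; omega
          · rw [wordProd_concat, hrx.2.1, hx2, mul_assoc, sTr_mul_self, mul_one]
          · simp [length_redWord]; omega
        have red_b : IsReducedWord n (redWord n x2 ++ [a]) (w * sTr n b) := by
          apply isReducedWord_of_len
          · intro c hc
            rcases List.mem_append.1 hc with hc | hc
            · exact hrx.1 c hc
            · simp at hc; omega
          · rw [wordProd_concat, hrx.2.1, ← hcomm, mul_assoc, sTr_mul_self, mul_one]
          · simp [length_redWord]; omega
        have ihm : m.foldl (demStep n) u = (redWord n x2 ++ [b]).foldl (demStep n) u :=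
          ih (len n (w * sTr n a)) (by omega) _ rfl _ _ hma red_a u
        have ihm' : m'.foldl (demStep n) u = (redWord n x2 ++ [a]).foldl (demStep n) u :=
          ih (len n (w * sTr n b)) (by omega) _ rfl _ _ hmb red_b u
        rw [ihm, ihm', List.foldl_append, List.foldl_append]
        simp only [List.foldl_cons, List.foldl_nil]
        exact demStep_comm he _
      · -- |a - b| = 1
        rcases (by omega : b = a + 1 ∨ a = b + 1) with rfl | rfl
        · exact braidcase a m m' hbb hl hl'
        · exact (braidcase b m' m haa hl' hl).symm

noncomputable def dprodF (n : ℕ) (u w : Perm (Fin n)) : Perm (Fin n) :=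
  (redWord n w).foldl (demStep n) u

lemma fold_red {l : List ℕ} {w : Perm (Fin n)} (h : IsReducedWord n l w)
    (u : Perm (Fin n)) : l.foldl (demStep n) u = dprodF n u w :=
  fold_wellDef (len n w) w rfl l (redWord n w) h (isReducedWord_redWord w) u

lemma demWord_concat (l : List ℕ) (a : ℕ) :
    demWord n (l ++ [a]) = demStep n (demWord n l) a := by
  simp [demWord, List.foldl_append]

lemma demWord_append (l₁ l₂ : List ℕ) :
    demWord n (l₁ ++ l₂) = l₂.foldl (demStep n) (demWord n l₁) := by
  simp [demWord, List.foldl_append]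

lemma demWord_red : ∀ {l : List ℕ} {w : Perm (Fin n)}, IsReducedWord n l w →
    demWord n l = w := by
  intro l
  induction l using List.reverseRecOn with
  | nil => intro w h; exact (h.2.1.symm : w = wordProd n []) ▸ rfl
  | append_singleton l a ih =>
    intro w h
    obtain ⟨hm, hd, ha⟩ := reduced_concat h
    rw [demWord_concat, ih hm]
    have hsq : w * sTr n a * sTr n a = w := by rw [mul_assoc, sTr_mul_self, mul_one]
    rw [demStep, hsq, if_pos (by omega)]

lemma redWord_one : redWord n 1 = [] := by
  have := length_redWord (n := n) 1
  rw [len_one] at this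
  exact List.length_eq_zero_iff.1 this

lemma dprodF_one_left (w : Perm (Fin n)) : dprodF n 1 w = w :=
  demWord_red (isReducedWord_redWord w)

lemma dprodF_one_right (u : Perm (Fin n)) : dprodF n u 1 = u := by
  rw [dprodF, redWord_one]; rfl

lemma len_demStep_le (a : ℕ) (u : Perm (Fin n)) :
    len n (demStep n u a) ≤ len n u + 1 := by
  by_cases h : len n (u * sTr n a) = len n u + 1
  · rw [demStep_inc h, h]
  · rw [demStep_stall h]; omega

lemma len_demWord_le (l : List ℕ) : len n (demWord n l) ≤ l.length := by
  induction l using List.reverseRecOn with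
  | nil => simp [demWord, len_one]
  | append_singleton l a ih =>
    rw [demWord_concat]
    have := len_demStep_le (n := n) a (demWord n l)
    simp only [List.length_append, List.length_singleton]
    omega

lemma fold_eq_dprodF : ∀ (l : List ℕ) (u : Perm (Fin n)),
    l.foldl (demStep n) u = dprodF n u (demWord n l) := by
  intro l
  induction l using List.reverseRecOn with
  | nil => intro u; simp [demWord, dprodF, redWord_one]
  | append_singleton l a ih =>
    intro u
    rw [List.foldl_append, demWord_concat]
    simp only [List.foldl_cons, List.foldl_nil]
    rw [ih u]
    set v := demWord n l with hv
    by_cases ha : a + 1 < n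
    · rcases len_mul_sTr_cases ha v with hc | hc
      · -- ascent
        rw [demStep_inc hc]
        have hred : IsReducedWord n (redWord n v ++ [a]) (v * sTr n a) := by
          apply isReducedWord_of_len
          · intro c hcm
            rcases List.mem_append.1 hcm with hcm | hcm
            · exact (isReducedWord_redWord v).1 c hcm
            · simp at hcm; omega
          · rw [wordProd_concat, (isReducedWord_redWord v).2.1]
          · rw [List.length_append, List.length_singleton, length_redWord]; omega
        have hfr := (fold_red hred u).symm
        rw [List.foldl_append] at hfr
        simp only [List.foldl_cons, List.foldl_nil] at hfr
        rw [hfr]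
        rfl
      · -- stall
        have hst : demStep n v a = v := demStep_stall (by omega)
        rw [hst]
        have hred := descent_reduced_concat ha hc
        have := fold_red hred u
        rw [List.foldl_append] at this
        simp only [List.foldl_cons, List.foldl_nil] at this
        rw [← this, demStep_idem]
    · rw [demStep_invalid ha, demStep_invalid ha]

lemma demStep_one_valid {a : ℕ} (ha : a + 1 < n) : demStep n (1 : Perm (Fin n)) a = sTr n a := by
  have h1 : (1 : Perm (Fin n)) ⟨a, Nat.lt_of_succ_lt ha⟩ < (1 : Perm (Fin n)) ⟨a + 1, ha⟩ := by
    simp only [Perm.one_apply]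
    exact Fin.lt_iff_val_lt_val.2 (by simp)
  rw [demStep_inc (len_mul_sTr_asc ha h1), one_mul]

lemma dprodF_sTr_inc {a : ℕ} (ha : a + 1 < n) {v : Perm (Fin n)}
    (hc : len n (v⁻¹ * sTr n a) = len n v⁻¹ + 1) :
    dprodF n (sTr n a) v = sTr n a * v := by
  have hred : IsReducedWord n (a :: redWord n v) (sTr n a * v) := by
    apply isReducedWord_of_len
    · intro c hcm
      rcases List.mem_cons.1 hcm with rfl | hcm
      · exact ha
      · exact (isReducedWord_redWord v).1 c hcm
    · rw [wordProd_cons, (isReducedWord_redWord v).2.1]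
    · have h1 : sTr n a * v = (v⁻¹ * sTr n a)⁻¹ := by
        rw [mul_inv_rev, inv_inv, sTr_inv]
      rw [List.length_cons, length_redWord, h1, len_inv, hc, len_inv]
  have h2 := fold_red hred (1 : Perm (Fin n))
  have h3 : demWord n (a :: redWord n v) = sTr n a * v := demWord_red hred
  rw [demWord] at h3
  simp only [List.foldl_cons] at h2 h3
  rw [demStep_one_valid ha] at h3
  rw [← h3]
  exact (fold_red (isReducedWord_redWord v) (sTr n a)).symm

lemma dprodF_sTr {a : ℕ} (ha : a + 1 < n) (v : Perm (Fin n)) :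
    dprodF n (sTr n a) v = (demStep n v⁻¹ a)⁻¹ := by
  rcases len_mul_sTr_cases ha v⁻¹ with hc | hc
  · rw [dprodF_sTr_inc ha hc, demStep_inc hc, mul_inv_rev, inv_inv, sTr_inv]
  · rw [demStep_stall (by omega), inv_inv]
    set v' := sTr n a * v with hv'
    have hinv : v'⁻¹ = v⁻¹ * sTr n a := by rw [hv', mul_inv_rev, sTr_inv]
    have hlv' : len n v' + 1 = len n v := by
      have h1 : len n v' = len n (v⁻¹ * sTr n a) := by rw [← len_inv v', hinv]
      have h2 : len n v = len n v⁻¹ := (len_inv v).symm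
      omega
    have hred : IsReducedWord n (a :: redWord n v') v := by
      apply isReducedWord_of_len
      · intro c hcm
        rcases List.mem_cons.1 hcm with rfl | hcm
        · exact ha
        · exact (isReducedWord_redWord v').1 c hcm
      · rw [wordProd_cons, (isReducedWord_redWord v').2.1, hv', ← mul_assoc,
          sTr_mul_self, one_mul]
      · rw [List.length_cons, length_redWord]; omega
    have hstep : demStep n (sTr n a) a = sTr n a := by
      apply demStep_stall
      rw [sTr_mul_self, len_one]
      omega
    have hinc2 : len n (v'⁻¹ * sTr n a) = len n v'⁻¹ + 1 := by
      have h3 : v'⁻¹ * sTr n a = v⁻¹ := by rw [hinv, mul_assoc, sTr_mul_self, mul_one]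
      have h4 : len n v'⁻¹ = len n (v⁻¹ * sTr n a) := by rw [hinv]
      have h2 : len n v = len n v⁻¹ := (len_inv v).symm
      rw [h3, h4]
      omega
    have hfold := fold_red hred (sTr n a)
    simp only [List.foldl_cons] at hfold
    rw [hstep] at hfold
    rw [← hfold]
    show dprodF n (sTr n a) v' = v
    rw [dprodF_sTr_inc ha hinc2, hv', ← mul_assoc, sTr_mul_self, one_mul]

lemma demWord_reverse : ∀ l : List ℕ, demWord n (l.reverse) = (demWord n l)⁻¹ := by
  intro l
  induction l with
  | nil => simp [demWord]
  | cons a t ih =>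
    rw [List.reverse_cons, demWord_concat, ih]
    have hcons : demWord n (a :: t) = t.foldl (demStep n) (demStep n 1 a) := by
      simp [demWord]
    rw [hcons, fold_eq_dprodF]
    set v := demWord n t with hv
    by_cases ha : a + 1 < n
    · rw [demStep_one_valid ha, dprodF_sTr ha, inv_inv]
    · rw [demStep_invalid ha, demStep_invalid ha, dprodF_one_left]

lemma invWordProd_eq (l : List ℕ) :
    invWordProd n l = dprodF n (demWord n l)⁻¹ (demWord n l) := by
  rw [invWordProd, demWord_append, demWord_reverse, fold_eq_dprodF]

lemma dem_eq (v : Perm (Fin n)) : dem n v⁻¹ v = dprodF n v⁻¹ v := by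
  rw [dem, demWord_append, demWord_red (isReducedWord_redWord v⁻¹)]
  rfl

lemma reduced_of_len_demWord : ∀ {l : List ℕ}, IsWord n l →
    len n (demWord n l) = l.length → wordProd n l = demWord n l := by
  intro l
  induction l using List.reverseRecOn with
  | nil => simp [wordProd, demWord]
  | append_singleton l a ih =>
    intro hw hlen
    have hw' : IsWord n l := fun c hc => hw c (by simp [hc])
    rw [demWord_concat] at hlen ⊢
    have hle := len_demWord_le (n := n) l
    have hstep := len_demStep_le (n := n) a (demWord n l)
    simp only [List.length_append, List.length_singleton] at hlen
    by_cases hc : len n (demWord n l * sTr n a) = len n (demWord n l) + 1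
    · rw [demStep_inc hc] at hlen ⊢
      have hll : len n (demWord n l) = l.length := by omega
      rw [wordProd_concat, ih hw' hll]
    · rw [demStep_stall hc] at hlen
      omega

theorem main (y : Perm (Fin n)) (hy : y⁻¹ = y) :
    (∀ l : List ℕ, IsInvWord n l y ↔
        ∃ w : Equiv.Perm (Fin n), IsAtomOf n w y ∧ IsReducedWord n l w) ∧
    (∀ l : List ℕ, ∀ w w' : Equiv.Perm (Fin n), IsAtomOf n w y → IsAtomOf n w' y →
        IsReducedWord n l w → IsReducedWord n l w' → w = w') := by
  constructor
  · intro l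
    constructor
    · rintro ⟨hword, hprod, hmin⟩
      set w := demWord n l with hwdef
      have h1 : dem n w⁻¹ w = y := by rw [dem_eq, ← invWordProd_eq, hprod]
      have hlw : len n w = l.length := by
        have hle : len n w ≤ l.length := len_demWord_le (n := n) l
        have hy2 : invWordProd n (redWord n w) = y := by
          rw [invWordProd_eq, demWord_red (isReducedWord_redWord w), ← dem_eq, h1]
        have h2 := hmin (redWord n w) (isReducedWord_redWord w).1 hy2
        rw [length_redWord] at h2
        omega
      have hprod' : wordProd n l = w := reduced_of_len_demWord hword hlw
      refine ⟨w, ⟨h1, ?_⟩, isReducedWord_of_len hword hprod' hlw.symm⟩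
      intro v hv
      have hy3 : invWordProd n (redWord n v) = y := by
        rw [invWordProd_eq, demWord_red (isReducedWord_redWord v), ← dem_eq, hv]
      have h2 := hmin (redWord n v) (isReducedWord_redWord v).1 hy3
      rw [length_redWord] at h2
      omega
    · rintro ⟨w, ⟨hdem, hminw⟩, hred⟩
      refine ⟨hred.1, ?_, ?_⟩
      · rw [invWordProd_eq, demWord_red hred, ← dem_eq, hdem]
      · intro l' hw' hp'
        have hved : dem n (demWord n l')⁻¹ (demWord n l') = y := by
          rw [dem_eq, ← invWordProd_eq, hp']
        have h2 := hminw (demWord n l') hved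
        have h3 := len_demWord_le (n := n) l'
        have h4 := length_eq_of_red hred
        omega
  · intro l w w' _ _ hr hr'
    rw [← hr.2.1, ← hr'.2.1]
end HMP

/-- For an involution `y`, the set of involution words of `y` is the disjoint union,
over all atoms `w` of `y`, of the sets of reduced words of `w`. -/
theorem invWords_eq_disjoint_union_of_atom_reduced_words
    (n : ℕ) (y : Equiv.Perm (Fin n)) (hy : y⁻¹ = y) :
    (∀ l : List ℕ, IsInvWord n l y ↔
        ∃ w : Equiv.Perm (Fin n), IsAtomOf n w y ∧ IsReducedWord n l w) ∧
    (∀ l : List ℕ, ∀ w w' : Equiv.Perm (Fin n), IsAtomOf n w y → IsAtomOf n w' y →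
        IsReducedWord n l w → IsReducedWord n l w' → w = w') := by
  exact HMP.main y hy
end
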